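/- arXiv:2004.05564 — 4 statements merged into one kernel-verified Lean document; each statement's English description precedes it below -/
import Mathlib

section
/- If u : ℝ² → ℝ is a smooth function that solves the minimal hypersurface equation div( Du / √(1 + |Du|²) ) = 0 on all of ℝ², satisfies |Du(p)| ≤ C for all p ∈ ℝ² and some constant C > 0, and is bounded from below or bounded from above, then u is constant. -/
open Real Set

noncomputable section

/-- The Euclidean plane `ℝ²`. -/
abbrev Plane : Type := EuclideanSpace ℝ (Fin 2)

/-- Divergence of a vector field on the Euclidean plane. -/
def pdiv (V : Plane → Plane) (x : Plane) : ℝ :=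
  ∑ i : Fin 2, fderiv ℝ V x (EuclideanSpace.single i (1 : ℝ)) i

/-- The minimal hypersurface equation in `ℝ × ℝ² = ℝ³`:
`div( Du / √(1 + |Du|²) ) = 0`. -/
def MinimalHypersurfaceEq (u : Plane → ℝ) : Prop :=
  ∀ x : Plane,
    pdiv (fun y => (Real.sqrt (1 + ‖gradient u y‖ ^ 2))⁻¹ • gradient u y) x = 0

namespace StmtAux

open MeasureTheory

/-! ### Linear algebra helper -/

lemma decomp (L : Plane →L[ℝ] ℝ) (w : Plane) :
    L w = ∑ i : Fin 2, L (EuclideanSpace.single i (1:ℝ)) * w i := by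
  have hw : w = ∑ i : Fin 2, w i • EuclideanSpace.single i (1:ℝ) := by
    ext j
    fin_cases j <;> simp [Finset.sum_apply, EuclideanSpace.single_apply]
  conv_lhs => rw [hw]
  rw [map_sum]
  congr 1; funext i
  rw [L.map_smul]; simp [mul_comm]

/-! ### Integration by parts against a divergence-free field -/

lemma key_identity (V : Plane → Plane) (hV : ContDiff ℝ (⊤:ℕ∞) V)
    (hdiv : ∀ x, pdiv V x = 0)
    (φ : Plane → ℝ) (hφ : ContDiff ℝ (⊤:ℕ∞) φ) (hφc : HasCompactSupport φ) :
    ∫ x : Plane, fderiv ℝ φ x (V x) = 0 := by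
  classical
  set e : Fin 2 → Plane := fun i => EuclideanSpace.single i (1:ℝ) with he
  have hVd : Differentiable ℝ V := hV.differentiable (by simp)
  have hφd : Differentiable ℝ φ := hφ.differentiable (by simp)
  have hVc : Continuous V := hV.continuous
  have hVfc : Continuous (fderiv ℝ V) := hV.continuous_fderiv (by simp)
  have hφfc : Continuous (fderiv ℝ φ) := hφ.continuous_fderiv (by simp)
  have hVi : ∀ i : Fin 2, Differentiable ℝ (fun x => V x i) :=
    fun i x => ((EuclideanSpace.proj (𝕜 := ℝ) i).differentiableAt.comp x (hVd x))
  have hVif : ∀ (i : Fin 2) (x : Plane),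
      fderiv ℝ (fun y => V y i) x (e i) = (fderiv ℝ V x (e i)) i := by
    intro i x
    have := ((EuclideanSpace.proj (𝕜 := ℝ) i).hasFDerivAt.comp x (hVd x).hasFDerivAt).fderiv
    rw [show (fun y => V y i) = (fun w : Plane => w i) ∘ V from rfl]
    rw [show (fun w : Plane => w i) = (EuclideanSpace.proj (𝕜 := ℝ) i : Plane → ℝ) from rfl, this]
    rfl
  have ibp : ∀ i : Fin 2,
      ∫ x : Plane, φ x * ((fderiv ℝ V x (e i)) i) =
        - ∫ x : Plane, (fderiv ℝ φ x (e i)) * V x i := by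
    intro i
    have hcont2 : Continuous fun x => (fderiv ℝ V x (e i)) i :=
      (EuclideanSpace.proj (𝕜 := ℝ) i).continuous.comp (hVfc.clm_apply continuous_const)
    have h1 : Integrable (fun x => (fderiv ℝ φ x (e i)) * V x i) volume := by
      apply Continuous.integrable_of_hasCompactSupport
      · exact (hφfc.clm_apply continuous_const).mul
          (((EuclideanSpace.proj (𝕜 := ℝ) i).continuous).comp hVc)
      · exact (((hφc.fderiv ℝ).comp_left (g := fun L : Plane →L[ℝ] ℝ => L (e i))
          (by simp)).mul_right)
    have h2 : Integrable (fun x => φ x * ((fderiv ℝ V x (e i)) i)) volume := by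
      apply Continuous.integrable_of_hasCompactSupport
      · exact hφ.continuous.mul hcont2
      · exact hφc.mul_right
    have h3 : Integrable (fun x => φ x * V x i) volume := by
      apply Continuous.integrable_of_hasCompactSupport
      · exact hφ.continuous.mul (((EuclideanSpace.proj (𝕜 := ℝ) i).continuous).comp hVc)
      · exact hφc.mul_right
    have := integral_mul_fderiv_eq_neg_fderiv_mul_of_integrable (μ := volume) (v := e i)
      (f := φ) (g := fun y => V y i) ?_ ?_ h3 (fun x _ => hφd x) (fun x _ => hVi i x)
    · rw [← this]
      congr 1; funext x; rw [hVif i x]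
    · simpa using h1
    · simp only [hVif i]; exact h2
  have sum1 : ∑ i : Fin 2, ∫ x : Plane, φ x * ((fderiv ℝ V x (e i)) i) = 0 := by
    rw [← integral_finset_sum]
    · have : ∀ x : Plane, ∑ i : Fin 2, φ x * ((fderiv ℝ V x (e i)) i) = φ x * pdiv V x := by
        intro x; rw [pdiv, Finset.mul_sum]
      simp only [this, hdiv, mul_zero, integral_zero]
    · intro i _
      apply Continuous.integrable_of_hasCompactSupport
      · exact hφ.continuous.mul
          ((EuclideanSpace.proj (𝕜 := ℝ) i).continuous.comp (hVfc.clm_apply continuous_const))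
      · exact hφc.mul_right
  have sum2 : ∫ x : Plane, fderiv ℝ φ x (V x) =
      ∑ i : Fin 2, ∫ x : Plane, (fderiv ℝ φ x (e i)) * V x i := by
    rw [← integral_finset_sum]
    · congr 1; funext x; exact decomp (fderiv ℝ φ x) (V x)
    · intro i _
      apply Continuous.integrable_of_hasCompactSupport
      · exact (hφfc.clm_apply continuous_const).mul
          (((EuclideanSpace.proj (𝕜 := ℝ) i).continuous).comp hVc)
      · exact (((hφc.fderiv ℝ).comp_left (g := fun L : Plane →L[ℝ] ℝ => L (e i))
          (by simp)).mul_right)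
  rw [sum2]
  have : ∀ i : Fin 2, ∫ x : Plane, (fderiv ℝ φ x (e i)) * V x i =
      - ∫ x : Plane, φ x * ((fderiv ℝ V x (e i)) i) := by
    intro i; rw [ibp i, neg_neg]
  rw [Finset.sum_congr rfl (fun i _ => this i), Finset.sum_neg_distrib, sum1, neg_zero]

/-! ### Cutoff functions -/

def psi : ContDiffBump (0:Plane) := ⟨1, 2, one_pos, one_lt_two⟩

def eta (R : ℝ) : Plane → ℝ := fun x => psi (R⁻¹ • x)

lemma eta_contDiff (R : ℝ) : ContDiff ℝ (⊤:ℕ∞) (eta R) :=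
  (psi.contDiff (n := (⊤ : ℕ∞))).comp (contDiff_const_smul R⁻¹)

lemma eta_nonneg (R : ℝ) (x : Plane) : 0 ≤ eta R x := psi.nonneg

lemma eta_le_one (R : ℝ) (x : Plane) : eta R x ≤ 1 := psi.le_one

lemma eta_one (R : ℝ) (hR : 0 < R) (x : Plane) (hx : ‖x‖ ≤ R) : eta R x = 1 := by
  apply psi.one_of_mem_closedBall
  simp only [Metric.mem_closedBall, dist_zero_right, norm_smul, norm_inv, Real.norm_eq_abs,
    abs_of_pos hR]
  show R⁻¹ * ‖x‖ ≤ psi.rIn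
  rw [show psi.rIn = 1 from rfl, inv_mul_le_iff₀ hR]
  linarith

lemma eta_zero (R : ℝ) (hR : 0 < R) (x : Plane) (hx : 2 * R ≤ ‖x‖) : eta R x = 0 := by
  apply psi.zero_of_le_dist
  simp only [dist_zero_right, norm_smul, norm_inv, Real.norm_eq_abs, abs_of_pos hR]
  show psi.rOut ≤ R⁻¹ * ‖x‖
  rw [show psi.rOut = 2 from rfl, le_inv_mul_iff₀ hR]
  linarith

lemma eta_hasCompactSupport (R : ℝ) (hR : 0 < R) : HasCompactSupport (eta R) := by
  apply HasCompactSupport.intro (isCompact_closedBall (0:Plane) (2*R))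
  intro x hx
  apply eta_zero R hR
  simp only [Metric.mem_closedBall, dist_zero_right, not_le] at hx
  exact hx.le

lemma eta_hasFDerivAt (R : ℝ) (x : Plane) :
    HasFDerivAt (eta R) ((fderiv ℝ (psi : Plane → ℝ) (R⁻¹ • x)).comp
      (R⁻¹ • ContinuousLinearMap.id ℝ Plane)) x := by
  have h1 : HasFDerivAt (fun y : Plane => R⁻¹ • y) (R⁻¹ • ContinuousLinearMap.id ℝ Plane) x :=
    (hasFDerivAt_id x).const_smul R⁻¹
  exact (((psi.contDiff (n := (⊤ : ℕ∞))).differentiable (by simp)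
    (R⁻¹ • x)).hasFDerivAt).comp x h1

lemma eta_fderiv_norm (R : ℝ) (hR : 0 < R) (M : ℝ)
    (hM : ∀ y : Plane, ‖fderiv ℝ (psi : Plane → ℝ) y‖ ≤ M) (x : Plane) :
    ‖fderiv ℝ (eta R) x‖ ≤ M * R⁻¹ := by
  rw [(eta_hasFDerivAt R x).fderiv]
  have h0 : 0 ≤ M := (norm_nonneg _).trans (hM 0)
  calc ‖(fderiv ℝ (psi : Plane → ℝ) (R⁻¹ • x)).comp (R⁻¹ • ContinuousLinearMap.id ℝ Plane)‖
      ≤ ‖fderiv ℝ (psi : Plane → ℝ) (R⁻¹ • x)‖ * ‖R⁻¹ • ContinuousLinearMap.id ℝ Plane‖ :=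
        ContinuousLinearMap.opNorm_comp_le _ _
    _ ≤ M * R⁻¹ := by
        apply mul_le_mul (hM _) ?_ (norm_nonneg _) h0
        refine (norm_smul_le (R⁻¹) (ContinuousLinearMap.id ℝ Plane)).trans ?_
        rw [Real.norm_eq_abs, abs_of_pos (inv_pos.2 hR)]
        calc R⁻¹ * ‖ContinuousLinearMap.id ℝ Plane‖ ≤ R⁻¹ * 1 :=
              mul_le_mul_of_nonneg_left ContinuousLinearMap.norm_id_le (inv_pos.2 hR).le
          _ = R⁻¹ := mul_one _

lemma eta_fderiv_zero (R : ℝ) (hR : 0 < R) (x : Plane) (hx : ‖x‖ < R) :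
    fderiv ℝ (eta R) x = 0 := by
  have h : eta R =ᶠ[nhds x] (fun _ => (1:ℝ)) := by
    filter_upwards [Metric.ball_mem_nhds x (show (0:ℝ) < R - ‖x‖ by linarith)] with y hy
    apply eta_one R hR
    rw [Metric.mem_ball, dist_eq_norm] at hy
    have h2 : ‖y‖ - ‖x‖ ≤ ‖y - x‖ := norm_sub_norm_le y x
    linarith
  rw [h.fderiv_eq, fderiv_fun_const]; rfl

lemma eta_fderiv_zero_outer (R : ℝ) (hR : 0 < R) (x : Plane) (hx : 2 * R < ‖x‖) :
    fderiv ℝ (eta R) x = 0 := by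
  have h : eta R =ᶠ[nhds x] (fun _ => (0:ℝ)) := by
    filter_upwards [Metric.ball_mem_nhds x (show (0:ℝ) < ‖x‖ - 2*R by linarith)] with y hy
    apply eta_zero R hR
    rw [Metric.mem_ball, dist_eq_norm] at hy
    have h2 : ‖x‖ - ‖y‖ ≤ ‖y - x‖ := by
      have := norm_sub_norm_le x y
      rw [show ‖x - y‖ = ‖y - x‖ from norm_sub_rev x y] at this
      linarith
    linarith
  rw [h.fderiv_eq, fderiv_fun_const]; rfl

lemma exists_M : ∃ M : ℝ, 0 ≤ M ∧ ∀ y : Plane, ‖fderiv ℝ (psi : Plane → ℝ) y‖ ≤ M := by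
  obtain ⟨M, hM⟩ := (psi.hasCompactSupport.fderiv ℝ).exists_bound_of_continuous
    ((psi.contDiff (n := (⊤ : ℕ∞))).continuous_fderiv (by simp))
  exact ⟨M, (norm_nonneg _).trans (hM 0), hM⟩

/-! ### Gradient facts -/

lemma grad_contDiff (u : Plane → ℝ) (hu : ContDiff ℝ (⊤:ℕ∞) u) :
    ContDiff ℝ (⊤:ℕ∞) (gradient u) := by
  have : gradient u = fun x => (InnerProductSpace.toDual ℝ Plane).symm (fderiv ℝ u x) := rfl
  rw [this]
  exact (InnerProductSpace.toDual ℝ Plane).symm.contDiff.comp (hu.fderiv_right (by simp))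

lemma fderiv_eval_grad (u : Plane → ℝ) (x w : Plane) :
    fderiv ℝ u x w = inner ℝ (gradient u x) w := by
  have h : fderiv ℝ u x = InnerProductSpace.toDual ℝ Plane (gradient u x) :=
    ((InnerProductSpace.toDual ℝ Plane).apply_symm_apply _).symm
  rw [h, InnerProductSpace.toDual_apply_apply]

lemma W_facts (u : Plane → ℝ) (hu : ContDiff ℝ (⊤:ℕ∞) u) :
    (∀ x, 1 ≤ Real.sqrt (1 + ‖gradient u x‖ ^ 2)) ∧
    ContDiff ℝ (⊤:ℕ∞) (fun x => Real.sqrt (1 + ‖gradient u x‖ ^ 2)) := by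
  constructor
  · intro x
    have h : (1:ℝ) ≤ 1 + ‖gradient u x‖ ^ 2 := by nlinarith [sq_nonneg ‖gradient u x‖]
    calc (1:ℝ) = Real.sqrt 1 := by simp
      _ ≤ _ := Real.sqrt_le_sqrt h
  · apply ContDiff.sqrt
    · exact contDiff_const.add ((grad_contDiff u hu).norm_sq ℝ)
    · intro x; positivity

lemma neg_solution (u : Plane → ℝ) (hms : MinimalHypersurfaceEq u) :
    MinimalHypersurfaceEq (fun x => -u x) := by
  intro x
  have hgrad : ∀ y, gradient (fun z => -u z) y = -gradient u y := by
    intro y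
    show (InnerProductSpace.toDual ℝ Plane).symm (fderiv ℝ (fun z => -u z) y) = _
    rw [fderiv_fun_neg, map_neg]
    rfl
  have hfield : (fun y => (Real.sqrt (1 + ‖gradient (fun z => -u z) y‖ ^ 2))⁻¹ •
      gradient (fun z => -u z) y) =
      fun y => -((Real.sqrt (1 + ‖gradient u y‖ ^ 2))⁻¹ • gradient u y) := by
    funext y
    rw [hgrad y, norm_neg, smul_neg]
  rw [hfield]
  have h2 : pdiv (fun y => -((Real.sqrt (1 + ‖gradient u y‖ ^ 2))⁻¹ • gradient u y)) x
      = - pdiv (fun y => (Real.sqrt (1 + ‖gradient u y‖ ^ 2))⁻¹ • gradient u y) x := by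
    unfold pdiv
    rw [← Finset.sum_neg_distrib]
    apply Finset.sum_congr rfl
    intro i _
    rw [fderiv_fun_neg]
    simp
  rw [h2, hms x, neg_zero]

/-! ### The main quantities -/

def gfun (u v : Plane → ℝ) (x : Plane) : ℝ :=
  ‖gradient u x‖ ^ 2 * ((v x * v x) * Real.sqrt (1 + ‖gradient u x‖ ^ 2))⁻¹

def Tfun (u v : Plane → ℝ) (R : ℝ) (x : Plane) : ℝ :=
  eta R x * (2 * ((v x)⁻¹ * ((Real.sqrt (1 + ‖gradient u x‖ ^ 2))⁻¹ *
    (fderiv ℝ (eta R) x (gradient u x)))))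

lemma gfun_nonneg (u v : Plane → ℝ) (hv1 : ∀ x, 1 ≤ v x) (x : Plane) : 0 ≤ gfun u v x := by
  have h1 : (0:ℝ) ≤ v x := le_trans zero_le_one (hv1 x)
  have h2 : (0:ℝ) ≤ Real.sqrt (1 + ‖gradient u x‖ ^ 2) := Real.sqrt_nonneg _
  exact mul_nonneg (pow_nonneg (norm_nonneg _) 2)
    (inv_nonneg.2 (mul_nonneg (mul_nonneg h1 h1) h2))

lemma gfun_cont (u v : Plane → ℝ) (hu : ContDiff ℝ (⊤:ℕ∞) u)
    (hvc : ContDiff ℝ (⊤:ℕ∞) v) (hv1 : ∀ x, 1 ≤ v x) :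
    Continuous (gfun u v) := by
  obtain ⟨hW1, hWc⟩ := W_facts u hu
  have hG : ContDiff ℝ (⊤:ℕ∞) (gradient u) := grad_contDiff u hu
  have hWne : ∀ x, Real.sqrt (1 + ‖gradient u x‖ ^ 2) ≠ 0 :=
    fun x => ne_of_gt (lt_of_lt_of_le one_pos (hW1 x))
  have hvne : ∀ x, v x ≠ 0 := fun x => ne_of_gt (lt_of_lt_of_le one_pos (hv1 x))
  apply Continuous.mul
  · exact (hG.continuous.norm).pow 2
  · apply Continuous.inv₀
    · exact ((hvc.continuous.mul hvc.continuous).mul hWc.continuous)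
    · intro x
      exact mul_ne_zero (mul_ne_zero (hvne x) (hvne x)) (hWne x)

/-! ### The Caccioppoli identity -/

lemma cacc (u : Plane → ℝ) (hu : ContDiff ℝ (⊤:ℕ∞) u) (hms : MinimalHypersurfaceEq u)
    (v : Plane → ℝ) (hvc : ContDiff ℝ (⊤:ℕ∞) v) (hv1 : ∀ x, 1 ≤ v x)
    (hvd : ∀ x, fderiv ℝ v x = fderiv ℝ u x)
    (R : ℝ) (hR : 1 ≤ R) :
    ∫ x : Plane, (eta R x * eta R x) * gfun u v x = ∫ x : Plane, Tfun u v R x := by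
  have hRpos : (0:ℝ) < R := lt_of_lt_of_le one_pos hR
  set G : Plane → Plane := gradient u with hGdef
  set W : Plane → ℝ := fun x => Real.sqrt (1 + ‖G x‖ ^ 2) with hWdef
  obtain ⟨hW1, hWc⟩ := W_facts u hu
  have hG : ContDiff ℝ (⊤:ℕ∞) G := grad_contDiff u hu
  have hWne : ∀ x, W x ≠ 0 := fun x => ne_of_gt (lt_of_lt_of_le one_pos (hW1 x))
  have hvne : ∀ x, v x ≠ 0 := fun x => ne_of_gt (lt_of_lt_of_le one_pos (hv1 x))
  set Vf : Plane → Plane := fun y => (Real.sqrt (1 + ‖gradient u y‖ ^ 2))⁻¹ • gradient u y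
    with hVfdef
  have hVf : ContDiff ℝ (⊤:ℕ∞) Vf := (hWc.inv hWne).smul hG
  set φ : Plane → ℝ := fun x => (eta R x * eta R x) * (v x)⁻¹ with hφdef
  have hφ : ContDiff ℝ (⊤:ℕ∞) φ :=
    ((eta_contDiff R).mul (eta_contDiff R)).mul (hvc.inv hvne)
  have hφc : HasCompactSupport φ :=
    ((eta_hasCompactSupport R hRpos).mul_right).mul_right
  have hηd : ∀ x, HasFDerivAt (eta R) (fderiv ℝ (eta R) x) x :=
    fun x => ((eta_contDiff R).differentiable (by simp) x).hasFDerivAt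
  have hud : ∀ x : Plane, HasFDerivAt v (fderiv ℝ u x) x := by
    intro x
    have := (hvc.differentiable (by simp) x).hasFDerivAt
    rwa [hvd x] at this
  have hinv : ∀ x : Plane, HasFDerivAt (fun y => (v y)⁻¹)
      ((-((v x) ^ 2)⁻¹) • fderiv ℝ u x) x := by
    intro x
    exact (hasDerivAt_inv (hvne x)).comp_hasFDerivAt x (hud x)
  have hφd : ∀ x : Plane, HasFDerivAt φ
      ((eta R x * eta R x) • ((-((v x) ^ 2)⁻¹) • fderiv ℝ u x) +
        (v x)⁻¹ • (eta R x • fderiv ℝ (eta R) x + eta R x • fderiv ℝ (eta R) x)) x :=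
    fun x => ((hηd x).mul (hηd x)).mul (hinv x)
  have hkey := key_identity Vf hVf hms φ hφ hφc
  have hpoint : ∀ x : Plane, fderiv ℝ φ x (Vf x) =
      Tfun u v R x - (eta R x * eta R x) * gfun u v x := by
    intro x
    rw [(hφd x).fderiv]
    have hval : Vf x = (W x)⁻¹ • G x := rfl
    have h1 : fderiv ℝ u x (Vf x) = (W x)⁻¹ * ‖G x‖ ^ 2 := by
      rw [fderiv_eval_grad, hval, real_inner_smul_right, real_inner_self_eq_norm_sq]
    have h2 : fderiv ℝ (eta R) x (Vf x) = (W x)⁻¹ * (fderiv ℝ (eta R) x (G x)) := by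
      rw [hval, ContinuousLinearMap.map_smul, smul_eq_mul]
    simp only [ContinuousLinearMap.add_apply, ContinuousLinearMap.coe_smul', Pi.smul_apply,
      smul_eq_mul, h1, h2]
    rw [Tfun, gfun]
    have hWx := hWne x
    have hvx := hvne x
    field_simp
    ring
  have hηcont : Continuous (eta R) := (eta_contDiff R).continuous
  have hηfcont : Continuous (fderiv ℝ (eta R)) :=
    (eta_contDiff R).continuous_fderiv (by simp)
  have hgcont : Continuous (gfun u v) := gfun_cont u v hu hvc hv1
  have hPint : Integrable (fun x => (eta R x * eta R x) * gfun u v x) volume := by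
    apply Continuous.integrable_of_hasCompactSupport
    · exact (hηcont.mul hηcont).mul hgcont
    · exact ((eta_hasCompactSupport R hRpos).mul_right).mul_right
  have hTint : Integrable (Tfun u v R) volume := by
    apply Continuous.integrable_of_hasCompactSupport
    · apply hηcont.mul
      apply Continuous.mul continuous_const
      apply Continuous.mul (hvc.continuous.inv₀ hvne)
      exact (hWc.continuous.inv₀ hWne).mul (hηfcont.clm_apply hG.continuous)
    · exact (eta_hasCompactSupport R hRpos).mul_right
  have : ∫ x : Plane, (Tfun u v R x - (eta R x * eta R x) * gfun u v x) = 0 := by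
    rw [← hkey]
    congr 1
    funext x
    rw [hpoint x]
  rw [integral_sub hTint hPint] at this
  linarith [this]

end StmtAux
namespace StmtAux
open MeasureTheory

lemma young (ε a b : ℝ) (hε : 0 < ε) : 2 * a * b ≤ ε * a ^ 2 + ε⁻¹ * b ^ 2 := by
  have h1 : 0 ≤ ε⁻¹ := (inv_pos.2 hε).le
  have h2 : 0 ≤ ε⁻¹ * (ε * a - b) ^ 2 := mul_nonneg h1 (sq_nonneg _)
  have h3 : ε⁻¹ * ε = 1 := inv_mul_cancel₀ (ne_of_gt hε)
  nlinarith [h2, h3]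

lemma T_zero (u v : Plane → ℝ) (R : ℝ) (hR : 0 < R) (x : Plane) (hx : ‖x‖ < R) :
    Tfun u v R x = 0 := by
  rw [Tfun, eta_fderiv_zero R hR x hx]
  simp

lemma T_bound (u v : Plane → ℝ) (hu : ContDiff ℝ (⊤:ℕ∞) u) (hv1 : ∀ x, 1 ≤ v x)
    (R : ℝ) (ε : ℝ) (hε : 0 < ε) (x : Plane) :
    |Tfun u v R x| ≤ ε * ((eta R x * eta R x) * gfun u v x) +
      ε⁻¹ * ‖fderiv ℝ (eta R) x‖ ^ 2 := by
  obtain ⟨hW1, -⟩ := W_facts u hu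
  set a := eta R x with hadef
  set s := v x with hsdef
  set w := Real.sqrt (1 + ‖gradient u x‖ ^ 2) with hwdef
  set b := ‖gradient u x‖ with hbdef
  set c := ‖fderiv ℝ (eta R) x‖ with hcdef
  set d := fderiv ℝ (eta R) x (gradient u x) with hddef
  have ha0 : 0 ≤ a := eta_nonneg R x
  have hs1 : 1 ≤ s := hv1 x
  have hw1 : 1 ≤ w := hW1 x
  have hs0 : 0 < s := lt_of_lt_of_le one_pos hs1
  have hw0 : 0 < w := lt_of_lt_of_le one_pos hw1
  have hb0 : 0 ≤ b := norm_nonneg _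
  have hc0 : 0 ≤ c := norm_nonneg _
  have hd : |d| ≤ c * b := (fderiv ℝ (eta R) x).le_opNorm (gradient u x)
  have habs : |Tfun u v R x| ≤ 2 * a * (s⁻¹ * (w⁻¹ * (c * b))) := by
    rw [Tfun]
    rw [abs_mul, abs_mul, abs_mul, abs_mul]
    rw [abs_of_nonneg ha0, abs_of_nonneg (by norm_num : (0:ℝ) ≤ 2),
      abs_of_nonneg (inv_nonneg.2 hs0.le), abs_of_nonneg (inv_nonneg.2 hw0.le)]
    have : a * (2 * (s⁻¹ * (w⁻¹ * |d|))) ≤ a * (2 * (s⁻¹ * (w⁻¹ * (c * b)))) := by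
      apply mul_le_mul_of_nonneg_left _ ha0
      apply mul_le_mul_of_nonneg_left _ (by norm_num : (0:ℝ) ≤ 2)
      apply mul_le_mul_of_nonneg_left _ (inv_nonneg.2 hs0.le)
      exact mul_le_mul_of_nonneg_left hd (inv_nonneg.2 hw0.le)
    calc a * (2 * (s⁻¹ * (w⁻¹ * |d|))) ≤ a * (2 * (s⁻¹ * (w⁻¹ * (c * b)))) := this
      _ = 2 * a * (s⁻¹ * (w⁻¹ * (c * b))) := by ring
  have hyoung : 2 * (a * b * s⁻¹) * c ≤ ε * (a * b * s⁻¹) ^ 2 + ε⁻¹ * c ^ 2 :=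
    young ε (a * b * s⁻¹) c hε
  have hwinv1 : w⁻¹ ≤ 1 := inv_le_one_of_one_le₀ hw1
  have hwinv0 : 0 ≤ w⁻¹ := (inv_pos.2 hw0).le
  have heq : 2 * a * (s⁻¹ * (w⁻¹ * (c * b))) = (2 * (a * b * s⁻¹) * c) * w⁻¹ := by ring
  have hstep : (2 * (a * b * s⁻¹) * c) * w⁻¹ ≤
      (ε * (a * b * s⁻¹) ^ 2 + ε⁻¹ * c ^ 2) * w⁻¹ :=
    mul_le_mul_of_nonneg_right hyoung hwinv0
  have hexp : (ε * (a * b * s⁻¹) ^ 2 + ε⁻¹ * c ^ 2) * w⁻¹ =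
      ε * ((a * a) * (b ^ 2 * ((s * s) * w)⁻¹)) + (ε⁻¹ * c ^ 2) * w⁻¹ := by
    have hsne : s ≠ 0 := ne_of_gt hs0
    have hwne : w ≠ 0 := ne_of_gt hw0
    field_simp
  have hlast : (ε⁻¹ * c ^ 2) * w⁻¹ ≤ ε⁻¹ * c ^ 2 := by
    apply mul_le_of_le_one_right _ hwinv1
    positivity
  calc |Tfun u v R x| ≤ 2 * a * (s⁻¹ * (w⁻¹ * (c * b))) := habs
    _ = (2 * (a * b * s⁻¹) * c) * w⁻¹ := heq
    _ ≤ (ε * (a * b * s⁻¹) ^ 2 + ε⁻¹ * c ^ 2) * w⁻¹ := hstep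
    _ = ε * ((a * a) * (b ^ 2 * ((s * s) * w)⁻¹)) + (ε⁻¹ * c ^ 2) * w⁻¹ := hexp
    _ ≤ ε * ((a * a) * (b ^ 2 * ((s * s) * w)⁻¹)) + ε⁻¹ * c ^ 2 := by linarith [hlast]
    _ = ε * ((eta R x * eta R x) * gfun u v x) + ε⁻¹ * ‖fderiv ℝ (eta R) x‖ ^ 2 := by
        rw [gfun]

lemma D2_integrable (R : ℝ) (hR : 0 < R) :
    Integrable (fun x : Plane => ‖fderiv ℝ (eta R) x‖ ^ 2) volume := by
  apply Continuous.integrable_of_hasCompactSupport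
  · exact (((eta_contDiff R).continuous_fderiv (by simp)).norm).pow 2
  · exact ((eta_hasCompactSupport R hR).fderiv ℝ).comp_left
      (g := fun L : Plane →L[ℝ] ℝ => ‖L‖ ^ 2) (by simp)

lemma D2_bound : ∃ KD : ℝ, 0 ≤ KD ∧ ∀ R : ℝ, 1 ≤ R →
    ∫ x : Plane, ‖fderiv ℝ (eta R) x‖ ^ 2 ≤ KD := by
  obtain ⟨M, hM0, hM⟩ := exists_M
  set Vol : ℝ := (volume (Metric.ball (0:Plane) 1)).toReal with hVol
  have hVol0 : 0 ≤ Vol := ENNReal.toReal_nonneg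
  refine ⟨4 * M ^ 2 * Vol, by positivity, ?_⟩
  intro R hR
  have hRpos : (0:ℝ) < R := lt_of_lt_of_le one_pos hR
  have hRne : R ≠ 0 := ne_of_gt hRpos
  set s : Set Plane := Metric.closedBall 0 (2*R) with hsdef
  have hsmeas : MeasurableSet s := measurableSet_closedBall
  have hsfin : volume s < ⊤ := measure_closedBall_lt_top
  have hpoint : ∀ x : Plane, ‖fderiv ℝ (eta R) x‖ ^ 2 ≤
      s.indicator (fun _ => (M * R⁻¹) ^ 2) x := by
    intro x
    by_cases hx : x ∈ s
    · rw [Set.indicator_of_mem hx]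
      have := eta_fderiv_norm R hRpos M hM x
      have h2 : 0 ≤ M * R⁻¹ := by positivity
      nlinarith [norm_nonneg (fderiv ℝ (eta R) x)]
    · rw [Set.indicator_of_notMem hx]
      have hxout : 2 * R < ‖x‖ := by
        simp only [hsdef, Metric.mem_closedBall, dist_zero_right, not_le] at hx
        exact hx
      rw [eta_fderiv_zero_outer R hRpos x hxout]
      simp
  have hind : Integrable (s.indicator (fun _ => (M * R⁻¹) ^ 2)) volume := by
    rw [integrable_indicator_iff hsmeas]
    exact integrableOn_const hsfin.ne
  calc ∫ x : Plane, ‖fderiv ℝ (eta R) x‖ ^ 2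
      ≤ ∫ x : Plane, s.indicator (fun _ => (M * R⁻¹) ^ 2) x :=
        integral_mono (D2_integrable R hRpos) hind hpoint
    _ = (volume s).toReal * (M * R⁻¹) ^ 2 := by
        rw [integral_indicator_const _ hsmeas]
        simp [smul_eq_mul, Measure.real]
    _ ≤ 4 * M ^ 2 * Vol := by
        have hvols : (volume s).toReal = (2*R) ^ 2 * Vol := by
          rw [hsdef, Measure.addHaar_closedBall volume 0 (by positivity : (0:ℝ) ≤ 2*R)]
          rw [ENNReal.toReal_mul, ENNReal.toReal_ofReal (by positivity)]
          congr 2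
          simp [finrank_euclideanSpace_fin]
        rw [hvols]
        have : (2*R) ^ 2 * Vol * (M * R⁻¹) ^ 2 = 4 * M ^ 2 * Vol * (R * R⁻¹) ^ 2 := by ring
        rw [this, mul_inv_cancel₀ hRne]
        simp

end StmtAux
namespace StmtAux
open MeasureTheory Filter

lemma P_integrable (u v : Plane → ℝ) (hu : ContDiff ℝ (⊤:ℕ∞) u)
    (hvc : ContDiff ℝ (⊤:ℕ∞) v) (hv1 : ∀ x, 1 ≤ v x) (R : ℝ) (hR : 0 < R) :
    Integrable (fun x => (eta R x * eta R x) * gfun u v x) volume := by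
  apply Continuous.integrable_of_hasCompactSupport
  · exact (((eta_contDiff R).continuous).mul ((eta_contDiff R).continuous)).mul
      (gfun_cont u v hu hvc hv1)
  · exact ((eta_hasCompactSupport R hR).mul_right).mul_right

lemma T_integrable (u v : Plane → ℝ) (hu : ContDiff ℝ (⊤:ℕ∞) u)
    (hvc : ContDiff ℝ (⊤:ℕ∞) v) (hv1 : ∀ x, 1 ≤ v x) (R : ℝ) (hR : 0 < R) :
    Integrable (Tfun u v R) volume := by
  obtain ⟨hW1, hWc⟩ := W_facts u hu
  have hG : ContDiff ℝ (⊤:ℕ∞) (gradient u) := grad_contDiff u hu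
  have hWne : ∀ x, Real.sqrt (1 + ‖gradient u x‖ ^ 2) ≠ 0 :=
    fun x => ne_of_gt (lt_of_lt_of_le one_pos (hW1 x))
  have hvne : ∀ x, v x ≠ 0 := fun x => ne_of_gt (lt_of_lt_of_le one_pos (hv1 x))
  apply Continuous.integrable_of_hasCompactSupport
  · apply ((eta_contDiff R).continuous).mul
    apply Continuous.mul continuous_const
    apply Continuous.mul (hvc.continuous.inv₀ hvne)
    exact (hWc.continuous.inv₀ hWne).mul
      (((eta_contDiff R).continuous_fderiv (by simp)).clm_apply hG.continuous)
  · exact (eta_hasCompactSupport R hR).mul_right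

lemma main_below (u : Plane → ℝ) (hu : ContDiff ℝ (⊤:ℕ∞) u)
    (hms : MinimalHypersurfaceEq u) (m : ℝ) (hm : ∀ x, m ≤ u x) :
    ∀ p q : Plane, u p = u q := by
  classical
  set v : Plane → ℝ := fun x => u x + (1 - m) with hvdef
  have hv1 : ∀ x, 1 ≤ v x := fun x => by
    have := hm x; simp only [hvdef]; linarith
  have hvc : ContDiff ℝ (⊤:ℕ∞) v := hu.add contDiff_const
  have hvd : ∀ x, fderiv ℝ v x = fderiv ℝ u x := fun x => fderiv_add_const _
  have hg0 : ∀ x, 0 ≤ gfun u v x := gfun_nonneg u v hv1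
  have hgcont : Continuous (gfun u v) := gfun_cont u v hu hvc hv1
  obtain ⟨KD, hKD0, hKD⟩ := D2_bound
  -- Stage 1 : uniform bound on ∫ η² g
  have stage1 : ∀ R : ℝ, 1 ≤ R →
      ∫ x : Plane, (eta R x * eta R x) * gfun u v x ≤ 4 * KD := by
    intro R hR
    have hRpos : (0:ℝ) < R := lt_of_lt_of_le one_pos hR
    have hA := cacc u hu hms v hvc hv1 hvd R hR
    have hPi := P_integrable u v hu hvc hv1 R hRpos
    have hTi := T_integrable u v hu hvc hv1 R hRpos
    have hD2i := D2_integrable R hRpos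
    have hmono : ∫ x : Plane, Tfun u v R x ≤
        ∫ x : Plane, (2⁻¹ * ((eta R x * eta R x) * gfun u v x) +
          2 * ‖fderiv ℝ (eta R) x‖ ^ 2) := by
      apply integral_mono hTi ((hPi.const_mul 2⁻¹).add (hD2i.const_mul 2))
      intro x
      refine (le_abs_self _).trans ((T_bound u v hu hv1 R 2⁻¹ (by norm_num) x).trans ?_)
      norm_num
    rw [integral_add (hPi.const_mul 2⁻¹) (hD2i.const_mul 2), integral_const_mul,
      integral_const_mul] at hmono
    have hD2 := hKD R hR
    linarith
  -- integrability of g on balls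
  have hgOn : ∀ r : ℝ, IntegrableOn (gfun u v) (Metric.ball (0:Plane) r) volume := fun r =>
    (hgcont.continuousOn.integrableOn_compact (isCompact_closedBall _ _)).mono_set
      Metric.ball_subset_closedBall
  -- ball-restricted integrals are uniformly bounded
  have hball_le : ∀ n : ℕ, ∫ x in Metric.ball (0:Plane) ((n:ℝ)+1), gfun u v x ≤ 4 * KD := by
    intro n
    set R : ℝ := (n:ℝ) + 1 with hRdef
    have hR : (1:ℝ) ≤ R := by
      have : (0:ℝ) ≤ (n:ℝ) := Nat.cast_nonneg n
      simp only [hRdef]; linarith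
    have hRpos : (0:ℝ) < R := lt_of_lt_of_le one_pos hR
    have hindint : Integrable ((Metric.ball (0:Plane) R).indicator (gfun u v)) volume :=
      (integrable_indicator_iff measurableSet_ball).2 (hgOn R)
    have h1 : ∫ x in Metric.ball (0:Plane) R, gfun u v x =
        ∫ x : Plane, (Metric.ball (0:Plane) R).indicator (gfun u v) x :=
      (integral_indicator measurableSet_ball).symm
    rw [h1]
    refine le_trans (integral_mono hindint (P_integrable u v hu hvc hv1 R hRpos) ?_)
      (stage1 R hR)
    intro x
    by_cases hx : x ∈ Metric.ball (0:Plane) R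
    · rw [Set.indicator_of_mem hx]
      have hxn : ‖x‖ ≤ R := by
        rw [Metric.mem_ball, dist_zero_right] at hx; exact hx.le
      show gfun u v x ≤ eta R x * eta R x * gfun u v x
      rw [eta_one R hRpos x hxn]
      simp
    · rw [Set.indicator_of_notMem hx]
      exact mul_nonneg (mul_nonneg (eta_nonneg R x) (eta_nonneg R x)) (hg0 x)
  -- global integrability of g
  have hgInt : Integrable (gfun u v) volume := by
    refine ⟨hgcont.aestronglyMeasurable, ?_⟩
    rw [hasFiniteIntegral_iff_norm]
    have hnorm : ∀ x : Plane, ENNReal.ofReal ‖gfun u v x‖ = ENNReal.ofReal (gfun u v x) :=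
      fun x => by rw [Real.norm_of_nonneg (hg0 x)]
    have hsup : ∀ x : Plane, ENNReal.ofReal (gfun u v x) =
        ⨆ n : ℕ, (Metric.ball (0:Plane) ((n:ℝ)+1)).indicator
          (fun y => ENNReal.ofReal (gfun u v y)) x := by
      intro x
      apply le_antisymm
      · obtain ⟨n, hn⟩ := exists_nat_gt ‖x‖
        refine le_iSup_of_le n (le_of_eq ?_)
        rw [Set.indicator_of_mem]
        rw [Metric.mem_ball, dist_zero_right]
        linarith
      · apply iSup_le
        intro n
        by_cases hx : x ∈ Metric.ball (0:Plane) ((n:ℝ)+1)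
        · rw [Set.indicator_of_mem hx]
        · rw [Set.indicator_of_notMem hx]
          exact zero_le
    calc ∫⁻ x : Plane, ENNReal.ofReal ‖gfun u v x‖
        = ∫⁻ x : Plane, ENNReal.ofReal (gfun u v x) := lintegral_congr hnorm
      _ = ∫⁻ x : Plane, ⨆ n : ℕ, (Metric.ball (0:Plane) ((n:ℝ)+1)).indicator
            (fun y => ENNReal.ofReal (gfun u v y)) x := lintegral_congr hsup
      _ = ⨆ n : ℕ, ∫⁻ x : Plane, (Metric.ball (0:Plane) ((n:ℝ)+1)).indicator
            (fun y => ENNReal.ofReal (gfun u v y)) x := by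
          apply lintegral_iSup
          · exact fun n => (hgcont.measurable.ennreal_ofReal).indicator measurableSet_ball
          · intro a b hab x
            apply Set.indicator_le_indicator_of_subset
            · apply Metric.ball_subset_ball
              have : (a:ℝ) ≤ (b:ℝ) := Nat.cast_le.2 hab
              linarith
            · exact fun y => zero_le
      _ ≤ ENNReal.ofReal (4 * KD) := by
          apply iSup_le
          intro n
          rw [lintegral_indicator measurableSet_ball]
          rw [← ofReal_integral_eq_lintegral_ofReal (hgOn _) (ae_of_all _ hg0)]
          exact ENNReal.ofReal_le_ofReal (hball_le n)
      _ < ⊤ := ENNReal.ofReal_lt_top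
  -- convergence of ball integrals
  have hmono_balls : Monotone (fun n : ℕ => Metric.ball (0:Plane) ((n:ℝ)+1)) := by
    intro a b hab
    apply Metric.ball_subset_ball
    have : (a:ℝ) ≤ (b:ℝ) := Nat.cast_le.2 hab
    linarith
  have hunion : (⋃ n : ℕ, Metric.ball (0:Plane) ((n:ℝ)+1)) = univ := by
    ext x
    simp only [mem_iUnion, mem_univ, iff_true]
    obtain ⟨n, hn⟩ := exists_nat_gt ‖x‖
    exact ⟨n, by rw [Metric.mem_ball, dist_zero_right]; linarith⟩
  have htend : Tendsto (fun n : ℕ => ∫ x in Metric.ball (0:Plane) ((n:ℝ)+1), gfun u v x)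
      atTop (nhds (∫ x : Plane, gfun u v x)) := by
    have h := tendsto_setIntegral_of_monotone (fun n : ℕ => measurableSet_ball)
      hmono_balls (by rw [hunion]; exact integrableOn_univ.2 hgInt)
    rw [hunion] at h
    simpa using h
  -- Stage 2
  have stage2 : ∀ ε : ℝ, 0 < ε → (∫ x : Plane, gfun u v x) ≤ ε⁻¹ * KD := by
    intro ε hε
    have hineq : ∀ n : ℕ, ∫ x in Metric.ball (0:Plane) ((n:ℝ)+1), gfun u v x ≤
        ε * ((∫ x : Plane, gfun u v x) -
          ∫ x in Metric.ball (0:Plane) ((n:ℝ)+1), gfun u v x) + ε⁻¹ * KD := by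
      intro n
      set R : ℝ := (n:ℝ) + 1 with hRdef
      have hR : (1:ℝ) ≤ R := by
        have : (0:ℝ) ≤ (n:ℝ) := Nat.cast_nonneg n
        simp only [hRdef]; linarith
      have hRpos : (0:ℝ) < R := lt_of_lt_of_le one_pos hR
      have hPi := P_integrable u v hu hvc hv1 R hRpos
      have hTi := T_integrable u v hu hvc hv1 R hRpos
      have hD2i := D2_integrable R hRpos
      -- ∫_{ball} g ≤ ∫ P
      have h1 : ∫ x in Metric.ball (0:Plane) R, gfun u v x ≤
          ∫ x : Plane, (eta R x * eta R x) * gfun u v x := by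
        have hindint : Integrable ((Metric.ball (0:Plane) R).indicator (gfun u v)) volume :=
          (integrable_indicator_iff measurableSet_ball).2 (hgOn R)
        rw [← integral_indicator measurableSet_ball]
        apply integral_mono hindint hPi
        intro x
        by_cases hx : x ∈ Metric.ball (0:Plane) R
        · rw [Set.indicator_of_mem hx]
          have hxn : ‖x‖ ≤ R := by
            rw [Metric.mem_ball, dist_zero_right] at hx; exact hx.le
          show gfun u v x ≤ eta R x * eta R x * gfun u v x
          rw [eta_one R hRpos x hxn]
          simp
        · rw [Set.indicator_of_notMem hx]
          exact mul_nonneg (mul_nonneg (eta_nonneg R x) (eta_nonneg R x)) (hg0 x)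
      -- ∫ T ≤ ε ∫_{ballᶜ} g + ε⁻¹ ∫ ‖Dη‖²
      have h2 : ∀ x : Plane, Tfun u v R x ≤
          ε * ((Metric.ball (0:Plane) R)ᶜ.indicator (gfun u v) x) +
            ε⁻¹ * ‖fderiv ℝ (eta R) x‖ ^ 2 := by
        intro x
        by_cases hx : ‖x‖ < R
        · rw [T_zero u v R hRpos x hx]
          have hmem : x ∈ Metric.ball (0:Plane) R := by
            rw [Metric.mem_ball, dist_zero_right]; exact hx
          rw [Set.indicator_of_notMem (by simpa using hmem)]
          have h3 : (0:ℝ) ≤ ε⁻¹ * ‖fderiv ℝ (eta R) x‖ ^ 2 := by positivity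
          linarith
        · push_neg at hx
          have hmem : x ∈ (Metric.ball (0:Plane) R)ᶜ := by
            simp only [mem_compl_iff, Metric.mem_ball, dist_zero_right, not_lt]
            exact hx
          rw [Set.indicator_of_mem hmem]
          refine (le_abs_self _).trans ((T_bound u v hu hv1 R ε hε x).trans ?_)
          have hPg : (eta R x * eta R x) * gfun u v x ≤ gfun u v x := by
            apply mul_le_of_le_one_left (hg0 x)
            exact mul_le_one₀ (eta_le_one R x) (eta_nonneg R x) (eta_le_one R x)
          have := mul_le_mul_of_nonneg_left hPg hε.le
          linarith
      have h3 : Integrable (fun x : Plane =>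
          ε * ((Metric.ball (0:Plane) R)ᶜ.indicator (gfun u v) x) +
            ε⁻¹ * ‖fderiv ℝ (eta R) x‖ ^ 2) volume := by
        apply Integrable.add
        · exact ((hgInt.indicator measurableSet_ball.compl).const_mul ε)
        · exact hD2i.const_mul ε⁻¹
      have h4 := integral_mono hTi h3 h2
      rw [integral_add ((hgInt.indicator measurableSet_ball.compl).const_mul ε)
        (hD2i.const_mul ε⁻¹), integral_const_mul, integral_const_mul,
        integral_indicator measurableSet_ball.compl] at h4
      have h5 : ∫ x in (Metric.ball (0:Plane) R)ᶜ, gfun u v x =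
          (∫ x : Plane, gfun u v x) - ∫ x in Metric.ball (0:Plane) R, gfun u v x := by
        have := integral_add_compl (measurableSet_ball
          (x := (0:Plane)) (ε := R)) hgInt
        linarith
      have hA := cacc u hu hms v hvc hv1 hvd R hR
      have hD2b := hKD R hR
      have hεinv : (0:ℝ) ≤ ε⁻¹ := (inv_pos.2 hε).le
      have h6 : ε⁻¹ * ∫ x : Plane, ‖fderiv ℝ (eta R) x‖ ^ 2 ≤ ε⁻¹ * KD :=
        mul_le_mul_of_nonneg_left hD2b hεinv
      rw [h5] at h4
      calc ∫ x in Metric.ball (0:Plane) R, gfun u v x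
          ≤ ∫ x : Plane, (eta R x * eta R x) * gfun u v x := h1
        _ = ∫ x : Plane, Tfun u v R x := hA
        _ ≤ ε * ((∫ x : Plane, gfun u v x) - ∫ x in Metric.ball (0:Plane) R, gfun u v x)
              + ε⁻¹ * ∫ x : Plane, ‖fderiv ℝ (eta R) x‖ ^ 2 := h4
        _ ≤ _ := by linarith
    have hlim : Tendsto (fun n : ℕ =>
        ε * ((∫ x : Plane, gfun u v x) -
          ∫ x in Metric.ball (0:Plane) ((n:ℝ)+1), gfun u v x) + ε⁻¹ * KD) atTop
        (nhds (ε * ((∫ x : Plane, gfun u v x) - ∫ x : Plane, gfun u v x) + ε⁻¹ * KD)) := by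
      exact (((tendsto_const_nhds.sub htend).const_mul ε).add tendsto_const_nhds)
    have := le_of_tendsto_of_tendsto' htend hlim hineq
    simpa using this
  -- conclude ∫ g = 0
  set I : ℝ := ∫ x : Plane, gfun u v x with hIdef
  have hI0 : 0 ≤ I := integral_nonneg hg0
  have hIzero : I = 0 := by
    rcases eq_or_lt_of_le hI0 with h | h
    · exact h.symm
    · exfalso
      rcases eq_or_lt_of_le hKD0 with hK | hK
      · have := stage2 1 one_pos
        rw [← hK] at this
        simp only [inv_one, mul_zero] at this
        linarith
      · have hεpos : (0:ℝ) < 2 * KD / I := by positivity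
        have hst := stage2 _ hεpos
        have : (2 * KD / I)⁻¹ * KD = I / 2 := by
          field_simp
        rw [this] at hst
        linarith
  have hae := (integral_eq_zero_iff_of_nonneg hg0 hgInt).1 hIzero
  have hzero : ∀ x : Plane, gfun u v x = 0 := by
    have heq : gfun u v = (fun _ => (0:ℝ)) :=
      (hgcont.ae_eq_iff_eq (μ := volume) continuous_const).1 hae
    exact fun x => congrFun heq x
  have hgradzero : ∀ x : Plane, gradient u x = 0 := by
    intro x
    have hz := hzero x
    rw [gfun] at hz
    have hW1 := (W_facts u hu).1 x
    have hv1x := hv1 x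
    have hpos : (0:ℝ) < (v x * v x) * Real.sqrt (1 + ‖gradient u x‖ ^ 2) := by nlinarith
    have hne : ((v x * v x) * Real.sqrt (1 + ‖gradient u x‖ ^ 2))⁻¹ ≠ 0 :=
      inv_ne_zero (ne_of_gt hpos)
    have hsq : ‖gradient u x‖ ^ 2 = 0 := by
      rcases mul_eq_zero.1 hz with h | h
      · exact h
      · exact absurd h hne
    rw [pow_eq_zero_iff (by norm_num : 2 ≠ 0)] at hsq
    exact norm_eq_zero.1 hsq
  have hfz : ∀ x : Plane, fderiv ℝ u x = 0 := by
    intro x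
    apply ContinuousLinearMap.ext
    intro w
    rw [fderiv_eval_grad, hgradzero x]
    simp
  exact fun p q => is_const_of_fderiv_eq_zero
    (hu.differentiable (by simp)) hfz p q
end StmtAux

theorem stmt3 (u : Plane → ℝ) (hu : ContDiff ℝ (⊤ : ℕ∞) u)
    (hms : MinimalHypersurfaceEq u)
    (C : ℝ) (hC : 0 < C) (hgrad : ∀ p, ‖gradient u p‖ ≤ C)
    (hbdd : BddBelow (Set.range u) ∨ BddAbove (Set.range u)) :
    ∀ p q : Plane, u p = u q := by
  have hu' : ContDiff ℝ (⊤:ℕ∞) u := hu.of_le (by simp)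
  rcases hbdd with h | h
  · obtain ⟨m, hm⟩ := h
    exact StmtAux.main_below u hu' hms m (fun x => hm ⟨x, rfl⟩)
  · obtain ⟨m, hm⟩ := h
    have h1 := StmtAux.main_below (fun x => -u x) hu'.neg (StmtAux.neg_solution u hms) (-m)
      (fun x => neg_le_neg (hm ⟨x, rfl⟩))
    intro p q
    have := h1 p q
    simp only [neg_inj] at this
    exact this
end
end

section
/- If u : ℝ² → ℝ is a smooth function that solves the minimal hypersurface equation div( Du / √(1 + |Du|²) ) = 0 on all of ℝ² and satisfies |Du(p)| ≤ C for all p ∈ ℝ² and some constant C > 0, then the graph of u is a totally geodesic hypersurface of ℝ³, i.e., u is an affine function: there exist a₁, a₂, b ∈ ℝ with u(x₁,x₂) = a₁x₁ + a₂x₂ + b for all (x₁,x₂) ∈ ℝ². -/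
open Real Set

noncomputable section

open MeasureTheory

open RealInnerProductSpace
set_option synthInstance.maxHeartbeats 1000000
set_option maxHeartbeats 1000000


/-- The nonlinearity `F p = p / √(1+|p|²)`. -/
def Fvec (p : Plane) : Plane := (Real.sqrt (1 + ‖p‖ ^ 2))⁻¹ • p

lemma W_pos (p : Plane) : 0 < Real.sqrt (1 + ‖p‖ ^ 2) := by
  apply Real.sqrt_pos.2; positivity

lemma W_sq (p : Plane) : (Real.sqrt (1 + ‖p‖ ^ 2)) ^ 2 = 1 + ‖p‖ ^ 2 := by
  rw [Real.sq_sqrt]; positivity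

lemma W_one_le (p : Plane) : 1 ≤ Real.sqrt (1 + ‖p‖ ^ 2) := by
  have := Real.sqrt_le_sqrt (show (1:ℝ) ≤ 1 + ‖p‖ ^ 2 by nlinarith [sq_nonneg ‖p‖])
  simpa using this

lemma norm_le_W (p : Plane) : ‖p‖ ≤ Real.sqrt (1 + ‖p‖ ^ 2) := by
  have := Real.sqrt_le_sqrt (show ‖p‖ ^ 2 ≤ 1 + ‖p‖ ^ 2 by linarith)
  rwa [Real.sqrt_sq (norm_nonneg p)] at this

set_option maxHeartbeats 1000000 in
/-- Key identity: `⟪F a - F b, a - b⟫ = (α+β)(‖a-b‖² - (α-β)²)/(2αβ)`. -/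
lemma Fvec_inner_identity (a b : Plane) :
    ⟪Fvec a - Fvec b, a - b⟫ =
      (Real.sqrt (1 + ‖a‖ ^ 2) + Real.sqrt (1 + ‖b‖ ^ 2)) *
        (‖a - b‖ ^ 2 - (Real.sqrt (1 + ‖a‖ ^ 2) - Real.sqrt (1 + ‖b‖ ^ 2)) ^ 2) /
        (2 * (Real.sqrt (1 + ‖a‖ ^ 2) * Real.sqrt (1 + ‖b‖ ^ 2))) := by
  set α := Real.sqrt (1 + ‖a‖ ^ 2) with hα
  set β := Real.sqrt (1 + ‖b‖ ^ 2) with hβ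
  have hαp : 0 < α := W_pos a
  have hβp : 0 < β := W_pos b
  have ha2 : ‖a‖ ^ 2 = α ^ 2 - 1 := by rw [hα, W_sq]; ring
  have hb2 : ‖b‖ ^ 2 = β ^ 2 - 1 := by rw [hβ, W_sq]; ring
  have hab : ‖a - b‖ ^ 2 = ‖a‖ ^ 2 - 2 * ⟪a, b⟫ + ‖b‖ ^ 2 := by
    rw [@norm_sub_sq_real]
  have expand : ⟪Fvec a - Fvec b, a - b⟫ =
      α⁻¹ * ‖a‖ ^ 2 + β⁻¹ * ‖b‖ ^ 2 - (α⁻¹ + β⁻¹) * ⟪a, b⟫ := by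
    simp only [Fvec, ← hα, ← hβ, inner_sub_left, inner_sub_right, inner_smul_left,
      real_inner_self_eq_norm_sq, RCLike.star_def, conj_trivial]
    rw [real_inner_comm b a]
    ring
  rw [expand, hab, ha2, hb2]
  field_simp
  ring

set_option maxHeartbeats 1000000 in
/-- Strong monotonicity of `F` on the ball of radius `C`. -/
lemma Fvec_strong_mono {C : ℝ} (a b : Plane) (ha : ‖a‖ ≤ C) (hb : ‖b‖ ≤ C) :
    (2 * (1 + C ^ 2) * Real.sqrt (1 + C ^ 2))⁻¹ * ‖a - b‖ ^ 2
      ≤ ⟪Fvec a - Fvec b, a - b⟫ := by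
  set α := Real.sqrt (1 + ‖a‖ ^ 2) with hα
  set β := Real.sqrt (1 + ‖b‖ ^ 2) with hβ
  set γ := Real.sqrt (1 + C ^ 2) with hγdef
  set s := ‖a - b‖ ^ 2 with hsdef
  have hαp : 0 < α := W_pos a
  have hβp : 0 < β := W_pos b
  have hs : 0 ≤ s := sq_nonneg _
  have ha2 : α ^ 2 = 1 + ‖a‖ ^ 2 := by rw [hα, W_sq]
  have hb2 : β ^ 2 = 1 + ‖b‖ ^ 2 := by rw [hβ, W_sq]
  have hγpos : 0 < γ := by rw [hγdef]; apply Real.sqrt_pos.2; positivity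
  have hγsq : γ ^ 2 = 1 + C ^ 2 := by rw [hγdef]; exact Real.sq_sqrt (by positivity)
  have hαγ : α ≤ γ := by
    rw [hα, hγdef]; apply Real.sqrt_le_sqrt; nlinarith [norm_nonneg a]
  have hβγ : β ≤ γ := by
    rw [hβ, hγdef]; apply Real.sqrt_le_sqrt; nlinarith [norm_nonneg b]
  -- (α-β)² (α+β)² ≤ ‖a+b‖² ‖a-b‖²
  have hdiff : α ^ 2 - β ^ 2 = ⟪a + b, a - b⟫ := by
    rw [ha2, hb2, inner_add_left, inner_sub_right, inner_sub_right,
      real_inner_self_eq_norm_sq, real_inner_self_eq_norm_sq, real_inner_comm b a]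
    ring
  have key : (α - β) ^ 2 * (α + β) ^ 2 ≤ ‖a + b‖ ^ 2 * s := by
    have h0 : ((α - β) * (α + β)) ^ 2 = ⟪a + b, a - b⟫ ^ 2 := by rw [← hdiff]; ring
    have h1 := abs_real_inner_le_norm (a + b) (a - b)
    calc (α - β) ^ 2 * (α + β) ^ 2 = ⟪a + b, a - b⟫ ^ 2 := by rw [← h0]; ring
      _ ≤ (‖a + b‖ * ‖a - b‖) ^ 2 := by
          nlinarith [abs_nonneg ⟪a + b, a - b⟫, sq_abs ⟪a + b, a - b⟫]
      _ = ‖a + b‖ ^ 2 * s := by rw [hsdef]; ring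
  -- (α+β)² - ‖a+b‖² ≥ 2
  have hsum : 2 ≤ (α + β) ^ 2 - ‖a + b‖ ^ 2 := by
    have h1 : ‖a + b‖ ^ 2 = ‖a‖ ^ 2 + 2 * ⟪a, b⟫ + ‖b‖ ^ 2 := by
      rw [@norm_add_sq_real]
    have h2 : ⟪a, b⟫ ≤ ‖a‖ * ‖b‖ := real_inner_le_norm a b
    have h3 : ‖a‖ * ‖b‖ ≤ α * β :=
      mul_le_mul (norm_le_W a) (norm_le_W b) (norm_nonneg b) (le_of_lt hαp)
    nlinarith
  have P2 : 2 * s ≤ (α + β) ^ 2 * (s - (α - β) ^ 2) := by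
    have h4 := mul_le_mul_of_nonneg_right hsum hs
    nlinarith [key]
  rw [Fvec_inner_identity a b, ← hα, ← hβ, ← hsdef]
  rw [le_div_iff₀ (by positivity)]
  have hαβ : 0 < α + β := by linarith
  apply le_of_mul_le_mul_right _ hαβ
  set lam := (2 * (1 + C ^ 2) * γ)⁻¹ with hlamdef
  have hlam_nonneg : 0 ≤ lam := by rw [hlamdef]; positivity
  have hlam4 : lam * (4 * γ ^ 3) = 2 := by
    have h5 : 2 * (1 + C ^ 2) * γ = 2 * γ ^ 3 := by rw [← hγsq]; ring
    rw [hlamdef, h5]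
    rw [inv_mul_eq_div, div_eq_iff (by positivity)]
    ring
  have h4 : 2 * (α * β) * (α + β) ≤ 4 * γ ^ 3 := by
    have hab_le : α * β ≤ γ * γ := mul_le_mul hαγ hβγ hβp.le hγpos.le
    have hsum_le : α + β ≤ 2 * γ := by linarith
    have := mul_le_mul hab_le hsum_le (by linarith) (by positivity)
    nlinarith [this]
  calc lam * s * (2 * (α * β)) * (α + β)
      = s * (lam * (2 * (α * β) * (α + β))) := by ring
    _ ≤ s * (lam * (4 * γ ^ 3)) := by
        apply mul_le_mul_of_nonneg_left _ hs
        exact mul_le_mul_of_nonneg_left h4 hlam_nonneg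
    _ = 2 * s := by rw [hlam4]; ring
    _ ≤ (α + β) ^ 2 * (s - (α - β) ^ 2) := P2
    _ = (α + β) * (s - (α - β) ^ 2) * (α + β) := by ring

/-- `F` is `2`-Lipschitz. -/
lemma Fvec_lipschitz (a b : Plane) : ‖Fvec a - Fvec b‖ ≤ 2 * ‖a - b‖ := by
  set α := Real.sqrt (1 + ‖a‖ ^ 2) with hα
  set β := Real.sqrt (1 + ‖b‖ ^ 2) with hβ
  have hαp : 0 < α := W_pos a
  have hβp : 0 < β := W_pos b
  have hα1 : 1 ≤ α := W_one_le a
  have hβ1 : 1 ≤ β := W_one_le b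
  have ha2 : α ^ 2 = 1 + ‖a‖ ^ 2 := by rw [hα, W_sq]
  have hb2 : β ^ 2 = 1 + ‖b‖ ^ 2 := by rw [hβ, W_sq]
  have hbβ : ‖b‖ ≤ β := norm_le_W b
  have hsplit : Fvec a - Fvec b = α⁻¹ • (a - b) + ((β - α) / (α * β)) • b := by
    have : (β - α) / (α * β) = α⁻¹ - β⁻¹ := by field_simp
    rw [this, Fvec, Fvec, ← hα, ← hβ, smul_sub, sub_smul]
    abel
  have hαβ_lip : |β - α| ≤ ‖a - b‖ := by
    have h1 : |β - α| * (α + β) = |β ^ 2 - α ^ 2| := by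
      rw [show β ^ 2 - α ^ 2 = (β - α) * (α + β) by ring, abs_mul,
        abs_of_pos (by linarith : (0:ℝ) < α + β)]
    have h2 : |β ^ 2 - α ^ 2| = |‖b‖ - ‖a‖| * (‖a‖ + ‖b‖) := by
      rw [ha2, hb2, show 1 + ‖b‖^2 - (1 + ‖a‖^2) = (‖b‖ - ‖a‖) * (‖a‖ + ‖b‖) by ring,
        abs_mul, abs_of_nonneg (by positivity : (0:ℝ) ≤ ‖a‖ + ‖b‖)]
    have h3 : |‖b‖ - ‖a‖| ≤ ‖a - b‖ := by
      rw [abs_sub_comm]; exact abs_norm_sub_norm_le a b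
    have h4 : ‖a‖ + ‖b‖ ≤ α + β := by
      have := norm_le_W a; have := norm_le_W b; rw [← hα] at *; rw [← hβ] at *; linarith
    have h5 : |β - α| * (α + β) ≤ ‖a - b‖ * (α + β) := by
      rw [h1, h2]
      calc |‖b‖ - ‖a‖| * (‖a‖ + ‖b‖) ≤ ‖a - b‖ * (‖a‖ + ‖b‖) :=
            mul_le_mul_of_nonneg_right h3 (by positivity)
        _ ≤ ‖a - b‖ * (α + β) := mul_le_mul_of_nonneg_left h4 (norm_nonneg _)
    exact le_of_mul_le_mul_right h5 (by linarith)
  have hinv1 : α⁻¹ ≤ 1 := inv_le_one_of_one_le₀ hα1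
  have step1 : α⁻¹ * ‖a - b‖ ≤ ‖a - b‖ := by
    calc α⁻¹ * ‖a - b‖ ≤ 1 * ‖a - b‖ :=
          mul_le_mul_of_nonneg_right hinv1 (norm_nonneg _)
      _ = ‖a - b‖ := one_mul _
  have step2 : |β - α| / (α * β) * ‖b‖ ≤ ‖a - b‖ := by
    calc |β - α| / (α * β) * ‖b‖ ≤ |β - α| / (α * β) * β := by
          apply mul_le_mul_of_nonneg_left hbβ; positivity
      _ = |β - α| / α := by field_simp
      _ ≤ |β - α| / 1 := by
          apply div_le_div_of_nonneg_left (abs_nonneg _) one_pos hα1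
      _ = |β - α| := div_one _
      _ ≤ ‖a - b‖ := hαβ_lip
  calc ‖Fvec a - Fvec b‖ ≤ ‖α⁻¹ • (a - b)‖ + ‖((β - α) / (α * β)) • b‖ := by
        rw [hsplit]; exact norm_add_le _ _
    _ = α⁻¹ * ‖a - b‖ + |β - α| / (α * β) * ‖b‖ := by
        rw [norm_smul, norm_smul, Real.norm_eq_abs, Real.norm_eq_abs,
          abs_of_pos (by positivity : (0:ℝ) < α⁻¹), abs_div,
          abs_of_pos (by positivity : (0:ℝ) < α * β)]
    _ ≤ ‖a - b‖ + ‖a - b‖ := add_le_add step1 step2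
    _ = 2 * ‖a - b‖ := by ring


lemma abs_coord_le_norm (v : Plane) (i : Fin 2) : |v i| ≤ ‖v‖ := by
  have := EuclideanSpace.norm_eq v
  rw [this]
  have h1 : |v i| = Real.sqrt (|v i| ^ 2) := by
    rw [Real.sqrt_sq (abs_nonneg _)]
  rw [h1]
  apply Real.sqrt_le_sqrt
  rw [sq_abs]
  simp only [Real.norm_eq_abs, sq_abs]
  exact Finset.single_le_sum (f := fun j => v j ^ 2) (fun j _ => sq_nonneg _) (Finset.mem_univ i)

/-- Divergence theorem: the integral of the divergence of a compactly supported
`C¹` vector field on the plane vanishes. -/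
lemma integral_pdiv_eq_zero (G : Plane → Plane) (hG : ContDiff ℝ 1 G)
    (hsupp : HasCompactSupport G) : ∫ x : Plane, pdiv G x = 0 := by
  obtain ⟨N, hN0, hNsupp⟩ : ∃ N, 0 < N ∧ tsupport G ⊆ Metric.closedBall 0 N := by
    obtain ⟨N, hN⟩ := hsupp.isBounded.subset_closedBall 0
    exact ⟨max N 1, lt_of_lt_of_le one_pos (le_max_right _ _),
      hN.trans (Metric.closedBall_subset_closedBall (le_max_left _ _))⟩
  set e : Plane ≃L[ℝ] (Fin 2 → ℝ) := EuclideanSpace.equiv (Fin 2) ℝ with he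
  set Gr : (Fin 2 → ℝ) → (Fin 2 → ℝ) := fun y => e (G (e.symm y)) with hGr
  -- G vanishes (with derivative) outside the euclidean ball
  have hG0 : ∀ z : Plane, N < ‖z‖ → G z = 0 := by
    intro z hz
    apply image_eq_zero_of_notMem_tsupport
    intro hmem
    have := hNsupp hmem
    simp only [Metric.mem_closedBall, dist_zero_right] at this
    linarith
  have hG0' : ∀ z : Plane, N < ‖z‖ → fderiv ℝ G z = 0 := by
    intro z hz
    have hopen : IsOpen {w : Plane | N < ‖w‖} := by
      have : Continuous fun w : Plane => ‖w‖ := continuous_norm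
      exact isOpen_lt continuous_const this
    have hev : G =ᶠ[nhds z] (fun _ => 0) := by
      filter_upwards [hopen.mem_nhds hz] with w hw
      exact hG0 w hw
    rw [Filter.EventuallyEq.fderiv_eq hev, fderiv_fun_const]
    rfl
  -- derivative data for Gr
  have hdiffG : ∀ x : Plane, HasFDerivAt G (fderiv ℝ G x) x :=
    fun x => (hG.differentiable one_ne_zero x).hasFDerivAt
  set Gr' : (Fin 2 → ℝ) → (Fin 2 → ℝ) →L[ℝ] (Fin 2 → ℝ) := fun y =>
    (e.toContinuousLinearMap.comp (fderiv ℝ G (e.symm y))).comp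
      e.symm.toContinuousLinearMap with hGr'
  have hdGr : ∀ y, HasFDerivAt Gr (Gr' y) y := by
    intro y
    exact (e.toContinuousLinearMap.hasFDerivAt.comp _
      ((hdiffG (e.symm y)).comp y e.symm.toContinuousLinearMap.hasFDerivAt))
  -- the divergence transfers
  have hdiv_eq : ∀ x : Plane, (∑ i : Fin 2, Gr' (e x) (Pi.single i 1) i) = pdiv G x := by
    intro x
    unfold pdiv
    apply Finset.sum_congr rfl
    intro i _
    have h1 : e.symm (Pi.single i (1:ℝ)) = EuclideanSpace.single i (1:ℝ) := rfl
    have h2 : e.symm (e x) = x := e.symm_apply_apply x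
    simp only [hGr', ContinuousLinearMap.comp_apply, ContinuousLinearEquiv.coe_coe, h2]
    rw [h1]
    rfl
  -- continuity of the divergence
  have hfc : Continuous fun y : Fin 2 → ℝ => fderiv ℝ G (e.symm y) :=
    (hG.continuous_fderiv one_ne_zero).comp e.symm.continuous
  have hdivc : Continuous fun y : Fin 2 → ℝ => ∑ i : Fin 2, Gr' y (Pi.single i 1) i := by
    apply continuous_finset_sum
    intro i _
    have h1 : Continuous fun y : Fin 2 → ℝ => Gr' y (Pi.single i 1) := by
      simp only [hGr', ContinuousLinearMap.comp_apply, ContinuousLinearEquiv.coe_coe]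
      exact e.continuous.comp (hfc.clm_apply continuous_const)
    exact (continuous_apply i).comp h1
  -- vanishing of `Gr`, `Gr'` outside the sup-ball of radius N
  have hGr0 : ∀ y : Fin 2 → ℝ, N < ‖e.symm y‖ → Gr y = 0 := by
    intro y hy
    simp only [hGr, hG0 _ hy, map_zero]
  have hGr'0 : ∀ y : Fin 2 → ℝ, N < ‖e.symm y‖ → Gr' y = 0 := by
    intro y hy
    simp only [hGr', hG0' _ hy]
    ext v
    simp
  -- the box
  set a : Fin 2 → ℝ := fun _ => -(N + 1) with ha
  set b : Fin 2 → ℝ := fun _ => N + 1 with hb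
  have hle : a ≤ b := fun i => by simp [ha, hb]; linarith
  have hcoord : ∀ (y : Fin 2 → ℝ) (i : Fin 2), N < |y i| → N < ‖e.symm y‖ := by
    intro y i hy
    have h1 : |(e.symm y) i| ≤ ‖e.symm y‖ := abs_coord_le_norm _ i
    have h2 : (e.symm y) i = y i := rfl
    rw [h2] at h1
    linarith
  have key := MeasureTheory.integral_divergence_of_hasFDerivAt_off_countable
    (n := 1) a b hle Gr Gr' ∅ Set.countable_empty
    (Continuous.continuousOn (by
      exact e.continuous.comp (hG.continuous.comp e.symm.continuous)))
    (fun x _ => hdGr x)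
    ((hdivc.continuousOn).integrableOn_compact isCompact_Icc)
  -- all face integrals vanish
  have hfaces : ∀ i : Fin 2, (∫ x in Icc (a ∘ i.succAbove) (b ∘ i.succAbove),
        Gr (i.insertNth (b i) x) i) - ∫ x in Icc (a ∘ i.succAbove) (b ∘ i.succAbove),
        Gr (i.insertNth (a i) x) i = 0 := by
    intro i
    have hfront : ∀ x : Fin 1 → ℝ, Gr (i.insertNth (b i) x) = 0 := by
      intro x
      apply hGr0
      apply hcoord _ i
      rw [Fin.insertNth_apply_same]
      simp [hb]
      rw [abs_of_pos (by linarith)]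
      linarith
    have hback : ∀ x : Fin 1 → ℝ, Gr (i.insertNth (a i) x) = 0 := by
      intro x
      apply hGr0
      apply hcoord _ i
      rw [Fin.insertNth_apply_same]
      simp [ha]
      rw [abs_of_neg (by linarith)]
      linarith
    simp only [hfront, hback, Pi.zero_apply, integral_zero, sub_zero, sub_self]
  rw [Finset.sum_congr rfl (fun i _ => hfaces i), Finset.sum_const_zero] at key
  -- extend the integral from the box to all of ℝ²
  have hout : ∀ y ∉ Icc a b, (∑ i : Fin 2, Gr' y (Pi.single i 1) i) = 0 := by
    intro y hy
    have : ∃ i, N < |y i| := by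
      by_contra hcon
      push_neg at hcon
      apply hy
      constructor <;> intro i <;> simp [ha, hb] <;>
        [linarith [abs_le.1 (hcon i)|>.1]; linarith [abs_le.1 (hcon i)|>.2]]
    obtain ⟨i, hi⟩ := this
    rw [hGr'0 y (hcoord y i hi)]
    simp
  rw [setIntegral_eq_integral_of_forall_compl_eq_zero hout] at key
  -- transfer from (Fin 2 → ℝ) to the Euclidean plane
  have hmp := EuclideanSpace.volume_preserving_symm_measurableEquiv_toLp (Fin 2)
  have htrans : ∫ y : Fin 2 → ℝ, (∑ i : Fin 2, Gr' y (Pi.single i 1) i)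
      = ∫ x : Plane, ∑ i : Fin 2, Gr' (((MeasurableEquiv.toLp 2 (Fin 2 → ℝ)).symm) x) (Pi.single i 1) i :=
    (hmp.integral_comp ((MeasurableEquiv.toLp 2 (Fin 2 → ℝ)).symm).measurableEmbedding
      (fun y => ∑ i : Fin 2, Gr' y (Pi.single i 1) i)).symm
  have hme : ∀ x : Plane, ((MeasurableEquiv.toLp 2 (Fin 2 → ℝ)).symm) x = e x := fun _ => rfl
  rw [htrans] at key
  rw [show (fun x : Plane => pdiv G x) = fun x : Plane =>
      ∑ i : Fin 2, Gr' (((MeasurableEquiv.toLp 2 (Fin 2 → ℝ)).symm) x) (Pi.single i 1) i by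
    funext x
    rw [hme x, hdiv_eq x]]
  exact key


/-- A bound for the derivative of `Real.smoothTransition`. -/
lemma exists_smoothTransition_deriv_bound :
    ∃ M : ℝ, 0 < M ∧ ∀ t : ℝ, |deriv Real.smoothTransition t| ≤ M := by
  set χ := Real.smoothTransition with hχ
  have hχsmooth : ContDiff ℝ (⊤:ℕ∞) χ := Real.smoothTransition.contDiff
  have hcont : Continuous (deriv χ) := hχsmooth.continuous_deriv (by norm_cast)
  have h0 : ∀ t : ℝ, t < 0 → deriv χ t = 0 := by
    intro t ht
    have hev : χ =ᶠ[nhds t] (fun _ => 0) := by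
      filter_upwards [isOpen_Iio.mem_nhds (show t ∈ Iio (0:ℝ) from ht)] with s hs
      exact Real.smoothTransition.zero_of_nonpos (le_of_lt hs)
    rw [Filter.EventuallyEq.deriv_eq hev, deriv_const]
  have h1 : ∀ t : ℝ, 1 < t → deriv χ t = 0 := by
    intro t ht
    have hev : χ =ᶠ[nhds t] (fun _ => 1) := by
      filter_upwards [isOpen_Ioi.mem_nhds (show t ∈ Ioi (1:ℝ) from ht)] with s hs
      exact Real.smoothTransition.one_of_one_le (le_of_lt hs)
    rw [Filter.EventuallyEq.deriv_eq hev, deriv_const]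
  have hsupp : HasCompactSupport (deriv χ) := by
    apply HasCompactSupport.intro (isCompact_Icc (a := (0:ℝ)) (b := 1))
    intro t ht
    rcases lt_or_ge t 0 with h | h
    · exact h0 t h
    · exact h1 t (by by_contra hc; push_neg at hc; exact ht ⟨h, hc⟩)
  obtain ⟨M, hM⟩ := hsupp.exists_bound_of_continuous hcont
  refine ⟨max M 1, lt_of_lt_of_le one_pos (le_max_right _ _), fun t => ?_⟩
  calc |deriv χ t| = ‖deriv χ t‖ := (Real.norm_eq_abs _).symm
    _ ≤ M := hM t
    _ ≤ max M 1 := le_max_left _ _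

/-- Smooth cutoff functions adapted to the annulus `R ≤ ‖x‖ ≤ 2R`,
with a gradient bound `M/R` uniform in `R`. -/
lemma exists_cutoff : ∃ M : ℝ, 0 < M ∧ ∀ R : ℝ, 0 < R → ∃ φ : Plane → ℝ,
    ContDiff ℝ (⊤:ℕ∞) φ ∧ HasCompactSupport φ ∧
    (∀ x, 0 ≤ φ x) ∧ (∀ x, φ x ≤ 1) ∧
    (∀ x, ‖x‖ ≤ R → φ x = 1) ∧
    (∀ x, ‖x‖ < R → fderiv ℝ φ x = 0) ∧
    (∀ x, 2 * R < ‖x‖ → φ x = 0) ∧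
    (∀ x, 2 * R < ‖x‖ → fderiv ℝ φ x = 0) ∧
    (∀ x, ‖fderiv ℝ φ x‖ ≤ M / R) := by
  obtain ⟨Mχ, hMχpos, hMχ⟩ := exists_smoothTransition_deriv_bound
  refine ⟨2 * Mχ, by positivity, fun R hR => ?_⟩
  set χ := Real.smoothTransition with hχdef
  have hχsmooth : ContDiff ℝ (⊤:ℕ∞) χ := Real.smoothTransition.contDiff
  set a : Plane → ℝ := fun y => 4/3 - ⟪y, y⟫ * (3 * R ^ 2)⁻¹ with ha
  set φ : Plane → ℝ := fun y => χ (a y) with hφ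
  have hq : ∀ x : Plane, ⟪x, x⟫ = ‖x‖ ^ 2 := fun x => real_inner_self_eq_norm_sq x
  have hR2 : (0:ℝ) < 3 * R ^ 2 := by positivity
  have hinner_smooth : ContDiff ℝ (⊤:ℕ∞) (fun y : Plane => ⟪y, y⟫) :=
    contDiff_id.inner ℝ contDiff_id
  have ha_smooth : ContDiff ℝ (⊤:ℕ∞) a :=
    ContDiff.sub contDiff_const (hinner_smooth.mul contDiff_const)
  have hφ_smooth : ContDiff ℝ (⊤:ℕ∞) φ := hχsmooth.comp ha_smooth
  -- the three regions
  have hregion1 : ∀ x : Plane, ‖x‖ ≤ R → 1 ≤ a x := by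
    intro x hx
    have h1 : ⟪x, x⟫ ≤ R ^ 2 := by rw [hq]; nlinarith [norm_nonneg x]
    have h2 : ⟪x, x⟫ * (3 * R ^ 2)⁻¹ ≤ R ^ 2 * (3 * R ^ 2)⁻¹ :=
      mul_le_mul_of_nonneg_right h1 (by positivity)
    have h3 : R ^ 2 * (3 * R ^ 2)⁻¹ = 1/3 := by field_simp
    rw [ha]; dsimp only; linarith [h2.trans_eq h3]
  have hregion2 : ∀ x : Plane, 2 * R < ‖x‖ → a x < 0 := by
    intro x hx
    have h1 : (2 * R) ^ 2 < ⟪x, x⟫ := by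
      rw [hq]; nlinarith [norm_nonneg x, hR]
    have h2 : (2 * R) ^ 2 * (3 * R ^ 2)⁻¹ < ⟪x, x⟫ * (3 * R ^ 2)⁻¹ :=
      mul_lt_mul_of_pos_right h1 (by positivity)
    have h3 : (2 * R) ^ 2 * (3 * R ^ 2)⁻¹ = 4/3 := by field_simp; ring
    rw [ha]; dsimp only; linarith [h3 ▸ h2]
  have hone : ∀ x : Plane, ‖x‖ ≤ R → φ x = 1 := fun x hx =>
    Real.smoothTransition.one_of_one_le (hregion1 x hx)
  have hzero : ∀ x : Plane, 2 * R < ‖x‖ → φ x = 0 := fun x hx =>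
    Real.smoothTransition.zero_of_nonpos (le_of_lt (hregion2 x hx))
  -- vanishing of the derivative on the two open regions
  have hd1 : ∀ x : Plane, ‖x‖ < R → fderiv ℝ φ x = 0 := by
    intro x hx
    have hev : φ =ᶠ[nhds x] (fun _ => 1) := by
      filter_upwards [(isOpen_lt continuous_norm continuous_const).mem_nhds
        (show x ∈ {y : Plane | ‖y‖ < R} from hx)] with y hy
      exact hone y (le_of_lt hy)
    rw [Filter.EventuallyEq.fderiv_eq hev, fderiv_fun_const]; rfl
  have hd2 : ∀ x : Plane, 2 * R < ‖x‖ → fderiv ℝ φ x = 0 := by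
    intro x hx
    have hev : φ =ᶠ[nhds x] (fun _ => 0) := by
      filter_upwards [(isOpen_lt continuous_const continuous_norm).mem_nhds
        (show x ∈ {y : Plane | 2 * R < ‖y‖} from hx)] with y hy
      exact hzero y hy
    rw [Filter.EventuallyEq.fderiv_eq hev, fderiv_fun_const]; rfl
  -- compact support
  have hsupp : HasCompactSupport φ := by
    apply HasCompactSupport.intro (isCompact_closedBall (0:Plane) (2*R))
    intro x hx
    apply hzero
    simp only [Metric.mem_closedBall, dist_zero_right, not_le] at hx
    exact hx
  -- derivative formula and bound
  have hderiv : ∀ x : Plane, HasFDerivAt φ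
      ((deriv χ (a x) * (-(3 * R ^ 2)⁻¹)) • ((2:ℝ) • (innerSL ℝ x))) x := by
    intro x
    have hqd : HasFDerivAt (fun y : Plane => ⟪y, y⟫) ((2:ℝ) • (innerSL ℝ x)) x := by
      have h := (hasFDerivAt_id x).inner ℝ (hasFDerivAt_id x)
      refine h.congr_fderiv ?_
      ext v
      simp [fderivInnerCLM, real_inner_comm]
      ring
    have had : HasFDerivAt a ((-(3 * R ^ 2)⁻¹) • ((2:ℝ) • (innerSL ℝ x))) x := by
      have h1 := (hqd.mul_const ((3 * R ^ 2)⁻¹)).const_sub (4/3)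
      refine h1.congr_fderiv ?_
      ext v
      simp
    have hχd : HasDerivAt χ (deriv χ (a x)) (a x) :=
      ((hχsmooth.differentiable (by norm_cast)) (a x)).hasDerivAt
    have := hχd.comp_hasFDerivAt x had
    refine this.congr_fderiv ?_
    ext v
    simp
    ring
  have hbound : ∀ x : Plane, ‖fderiv ℝ φ x‖ ≤ 2 * Mχ / R := by
    intro x
    rcases le_or_gt ‖x‖ (2 * R) with hx | hx
    · rw [(hderiv x).fderiv]
      apply ContinuousLinearMap.opNorm_le_bound _ (by positivity)
      intro v
      have hval : ((deriv χ (a x) * (-(3 * R ^ 2)⁻¹)) • ((2:ℝ) • (innerSL ℝ x))) v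
          = (deriv χ (a x) * (-(3 * R ^ 2)⁻¹)) * (2 * ⟪x, v⟫) := by
        simp only [ContinuousLinearMap.smul_apply, innerSL_apply_apply, smul_eq_mul]
      rw [hval, Real.norm_eq_abs]
      have h1 : |(deriv χ (a x) * (-(3 * R ^ 2)⁻¹)) * (2 * ⟪x, v⟫)|
          = |deriv χ (a x)| * (3 * R ^ 2)⁻¹ * (2 * |⟪x, v⟫|) := by
        rw [abs_mul, abs_mul, abs_neg, abs_inv, abs_of_pos hR2, abs_mul]
        simp [abs_of_nonneg]
      rw [h1]
      have h2 : |⟪x, v⟫| ≤ ‖x‖ * ‖v‖ := abs_real_inner_le_norm x v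
      calc |deriv χ (a x)| * (3 * R ^ 2)⁻¹ * (2 * |⟪x, v⟫|)
          ≤ Mχ * (3 * R ^ 2)⁻¹ * (2 * (‖x‖ * ‖v‖)) := by
            apply mul_le_mul
            · exact mul_le_mul_of_nonneg_right (hMχ _) (by positivity)
            · apply mul_le_mul_of_nonneg_left h2 (by norm_num)
            · positivity
            · positivity
        _ ≤ Mχ * (3 * R ^ 2)⁻¹ * (2 * ((2 * R) * ‖v‖)) := by
            apply mul_le_mul_of_nonneg_left _ (by positivity)
            have := mul_le_mul_of_nonneg_right hx (norm_nonneg v)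
            linarith
        _ = (4 * Mχ / (3 * R)) * ‖v‖ := by field_simp; ring
        _ ≤ (2 * Mχ / R) * ‖v‖ := by
            apply mul_le_mul_of_nonneg_right _ (norm_nonneg v)
            rw [div_le_div_iff₀ (by positivity) hR]
            nlinarith [hMχpos, hR]
    · rw [hd2 x hx]
      simp only [norm_zero]
      positivity
  exact ⟨φ, hφ_smooth, hsupp, fun x => Real.smoothTransition.nonneg _,
    fun x => Real.smoothTransition.le_one _, hone, hd1, hzero, hd2, hbound⟩

/-! ### Calculus lemmas for `pdiv` -/

lemma vec_decomp (v : Plane) : v = ∑ i : Fin 2, v i • EuclideanSpace.single i (1:ℝ) := by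
  have h := (EuclideanSpace.basisFun (Fin 2) ℝ).sum_repr v
  simp only [EuclideanSpace.basisFun_repr, EuclideanSpace.basisFun_apply] at h
  exact h.symm

lemma clm_apply_decomp (ℓ : Plane →L[ℝ] ℝ) (v : Plane) :
    ℓ v = ∑ i : Fin 2, ℓ (EuclideanSpace.single i (1:ℝ)) * v i := by
  conv_lhs => rw [vec_decomp v]
  rw [map_sum]
  refine Finset.sum_congr rfl fun i _ => ?_
  rw [ContinuousLinearMap.map_smul, smul_eq_mul, mul_comm]

lemma pdiv_smul (f : Plane → ℝ) (V : Plane → Plane) (x : Plane)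
    (hf : DifferentiableAt ℝ f x) (hV : DifferentiableAt ℝ V x) :
    pdiv (fun y => f y • V y) x = fderiv ℝ f x (V x) + f x * pdiv V x := by
  unfold pdiv
  rw [fderiv_fun_smul hf hV]
  simp only [ContinuousLinearMap.add_apply, ContinuousLinearMap.coe_smul',
    Pi.smul_apply, ContinuousLinearMap.smulRight_apply, PiLp.add_apply,
    PiLp.smul_apply, smul_eq_mul]
  rw [Finset.sum_add_distrib, ← Finset.mul_sum]
  rw [clm_apply_decomp (fderiv ℝ f x) (V x)]
  ring

lemma pdiv_sub (V W : Plane → Plane) (x : Plane)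
    (hV : DifferentiableAt ℝ V x) (hW : DifferentiableAt ℝ W x) :
    pdiv (fun y => V y - W y) x = pdiv V x - pdiv W x := by
  unfold pdiv
  rw [fderiv_fun_sub hV hW]
  simp only [ContinuousLinearMap.sub_apply, PiLp.sub_apply]
  rw [Finset.sum_sub_distrib]

lemma fderiv_comp_add {F : Type*} [NormedAddCommGroup F] [NormedSpace ℝ F]
    (f : Plane → F) (hf : Differentiable ℝ f) (t x : Plane) :
    fderiv ℝ (fun y => f (y + t)) x = fderiv ℝ f (x + t) := by
  have h2 : HasFDerivAt (fun y : Plane => y + t) (ContinuousLinearMap.id ℝ Plane) x :=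
    (hasFDerivAt_id x).add_const t
  have h := ((hf (x + t)).hasFDerivAt).comp x h2
  rw [ContinuousLinearMap.comp_id] at h
  exact h.fderiv

lemma pdiv_translate (V : Plane → Plane) (hV : Differentiable ℝ V) (t x : Plane) :
    pdiv (fun y => V (y + t)) x = pdiv V (x + t) := by
  unfold pdiv
  rw [fderiv_comp_add V hV t x]

/-! ### Smoothness facts -/

lemma Fvec_contDiff : ContDiff ℝ (⊤:ℕ∞) Fvec := by
  rw [contDiff_iff_contDiffAt]
  intro p
  have hnorm : (fun q : Plane => 1 + ‖q‖ ^ 2) = fun q : Plane => 1 + ⟪q, q⟫ := by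
    funext q
    rw [real_inner_self_eq_norm_sq]
  have h1 : ContDiffAt ℝ (⊤:ℕ∞) (fun q : Plane => 1 + ‖q‖ ^ 2) p := by
    rw [hnorm]
    exact (contDiff_const.add (contDiff_id.inner ℝ contDiff_id)).contDiffAt
  have h2 : ContDiffAt ℝ (⊤:ℕ∞) (fun q : Plane => Real.sqrt (1 + ‖q‖ ^ 2)) p :=
    (contDiffAt_sqrt (by positivity : 1 + ‖p‖ ^ 2 ≠ 0)).comp p h1
  have h3 : ContDiffAt ℝ (⊤:ℕ∞) (fun q : Plane => (Real.sqrt (1 + ‖q‖ ^ 2))⁻¹) p :=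
    h2.inv (ne_of_gt (W_pos p))
  exact h3.smul contDiffAt_id

lemma gradient_contDiff (u : Plane → ℝ) (hu : ContDiff ℝ (⊤:ℕ∞) u) :
    ContDiff ℝ (⊤:ℕ∞) (gradient u) := by
  have h1 : ContDiff ℝ (⊤:ℕ∞) (fderiv ℝ u) := hu.fderiv_right (by norm_cast)
  have h2 : gradient u = fun x =>
      (InnerProductSpace.toDual ℝ Plane).symm (fderiv ℝ u x) := rfl
  rw [h2]
  exact ((InnerProductSpace.toDual ℝ Plane).symm.contDiff).comp h1

lemma inner_gradient (u : Plane → ℝ) (x v : Plane) :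
    ⟪gradient u x, v⟫ = fderiv ℝ u x v :=
  InnerProductSpace.toDual_symm_apply

/-! ### The key integral identity -/

lemma key_identity (u : Plane → ℝ) (hu : ContDiff ℝ (⊤:ℕ∞) u)
    (hms : MinimalHypersurfaceEq u) (t : Plane)
    (φ : Plane → ℝ) (hφ : ContDiff ℝ (⊤:ℕ∞) φ) (hφs : HasCompactSupport φ) :
    ∫ x : Plane,
      (φ x ^ 2 * ⟪gradient u x - gradient u (x + t),
          Fvec (gradient u x) - Fvec (gradient u (x + t))⟫
        + (2 * φ x * (u x - u (x + t)))
            * (fderiv ℝ φ x (Fvec (gradient u x) - Fvec (gradient u (x + t))))) = 0 := by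
  set g := gradient u with hgdef
  have hg : ContDiff ℝ (⊤:ℕ∞) g := gradient_contDiff u hu
  have htr : ContDiff ℝ (⊤:ℕ∞) (fun y : Plane => y + t) :=
    contDiff_id.add contDiff_const
  set V : Plane → Plane := fun y => Fvec (g y) - Fvec (g (y + t)) with hVdef
  have hV1 : ContDiff ℝ (⊤:ℕ∞) (fun y => Fvec (g y)) := Fvec_contDiff.comp hg
  have hV2 : ContDiff ℝ (⊤:ℕ∞) (fun y => Fvec (g (y + t))) := hV1.comp htr
  have hV : ContDiff ℝ (⊤:ℕ∞) V := hV1.sub hV2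
  set w : Plane → ℝ := fun y => u y - u (y + t) with hwdef
  have hw : ContDiff ℝ (⊤:ℕ∞) w := hu.sub (hu.comp htr)
  set f : Plane → ℝ := fun y => φ y ^ 2 * w y with hfdef
  have hf : ContDiff ℝ (⊤:ℕ∞) f := (hφ.pow 2).mul hw
  set G : Plane → Plane := fun y => f y • V y with hGdef
  have hG : ContDiff ℝ (⊤:ℕ∞) G := hf.smul hV
  have hGsupp : HasCompactSupport G := by
    apply HasCompactSupport.intro hφs
    intro x hx
    have hφ0 : φ x = 0 := image_eq_zero_of_notMem_tsupport hx
    simp only [hGdef, hfdef, hφ0]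
    norm_num
  have hint : ∫ x : Plane, pdiv G x = 0 :=
    integral_pdiv_eq_zero G (hG.of_le (by norm_cast)) hGsupp
  -- the minimal hypersurface equation for `Fvec ∘ g` and its translate
  have hms' : ∀ x : Plane, pdiv (fun y => Fvec (g y)) x = 0 := by
    intro x
    have := hms x
    simpa only [Fvec, hgdef] using this
  have hmst : ∀ x : Plane, pdiv (fun y => Fvec (g (y + t))) x = 0 := by
    intro x
    have h := pdiv_translate (fun y => Fvec (g y))
      (hV1.differentiable (by norm_cast)) t x
    rw [h, hms' (x + t)]
  -- pointwise identity for the divergence of G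
  have hpt : ∀ x : Plane, pdiv G x =
      φ x ^ 2 * ⟪g x - g (x + t), Fvec (g x) - Fvec (g (x + t))⟫
        + (2 * φ x * w x) * (fderiv ℝ φ x (V x)) := by
    intro x
    have hd1 : DifferentiableAt ℝ f x := (hf.differentiable (by norm_cast)) x
    have hd2 : DifferentiableAt ℝ V x := (hV.differentiable (by norm_cast)) x
    rw [show pdiv G x = pdiv (fun y => f y • V y) x from rfl, pdiv_smul f V x hd1 hd2]
    have hpdV : pdiv V x = 0 := by
      rw [show pdiv V x = pdiv (fun y => Fvec (g y) - Fvec (g (y + t))) x from rfl,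
        pdiv_sub _ _ x ((hV1.differentiable (by norm_cast)) x)
          ((hV2.differentiable (by norm_cast)) x), hms' x, hmst x, sub_zero]
    rw [hpdV, mul_zero, add_zero]
    -- expand the derivative of f = φ² w
    have hdφ : DifferentiableAt ℝ φ x := (hφ.differentiable (by norm_cast)) x
    have hdw : DifferentiableAt ℝ w x := (hw.differentiable (by norm_cast)) x
    have hdφ2 : DifferentiableAt ℝ (fun y => φ y ^ 2) x := hdφ.pow 2
    have hfd : fderiv ℝ f x = (φ x ^ 2) • fderiv ℝ w x + (w x) • fderiv ℝ (fun y => φ y ^ 2) x := by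
      rw [hfdef]
      exact fderiv_mul hdφ2 hdw
    have hφ2d : fderiv ℝ (fun y => φ y ^ 2) x = (2 * φ x) • fderiv ℝ φ x := by
      have hsq : (fun y => φ y ^ 2) = fun y => φ y * φ y := by
        funext y; ring
      rw [hsq, fderiv_fun_mul hdφ hdφ]
      ext v
      simp only [ContinuousLinearMap.add_apply, ContinuousLinearMap.coe_smul',
        Pi.smul_apply, smul_eq_mul]
      ring
    -- derivative of w
    have hut : Differentiable ℝ (fun y : Plane => u (y + t)) :=
      (hu.comp htr).differentiable (by norm_cast)
    have hwd : fderiv ℝ w x = fderiv ℝ u x - fderiv ℝ u (x + t) := by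
      rw [hwdef]
      rw [fderiv_fun_sub ((hu.differentiable (by norm_cast)) x) (hut x)]
      rw [fderiv_comp_add u (hu.differentiable (by norm_cast)) t x]
    have happ : fderiv ℝ f x (V x) =
        φ x ^ 2 * ⟪g x - g (x + t), V x⟫ + (2 * φ x * w x) * (fderiv ℝ φ x (V x)) := by
      rw [hfd, hφ2d, hwd]
      simp only [ContinuousLinearMap.add_apply, ContinuousLinearMap.coe_smul',
        Pi.smul_apply, ContinuousLinearMap.sub_apply, smul_eq_mul]
      rw [inner_sub_left, inner_gradient, inner_gradient]
      ring
    rw [happ]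
  calc ∫ x : Plane,
      (φ x ^ 2 * ⟪gradient u x - gradient u (x + t),
          Fvec (gradient u x) - Fvec (gradient u (x + t))⟫
        + (2 * φ x * (u x - u (x + t)))
            * (fderiv ℝ φ x (Fvec (gradient u x) - Fvec (gradient u (x + t)))))
      = ∫ x : Plane, pdiv G x := by
        congr 1
        funext x
        rw [hpt x]
    _ = 0 := hint

/-! ### The Caccioppoli-type inequality -/

def lamC (C : ℝ) : ℝ := (2 * (1 + C ^ 2) * Real.sqrt (1 + C ^ 2))⁻¹

lemma lamC_pos (C : ℝ) : 0 < lamC C := by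
  unfold lamC
  have : 0 < Real.sqrt (1 + C ^ 2) := Real.sqrt_pos.2 (by positivity)
  positivity

lemma cacc (u : Plane → ℝ) (hu : ContDiff ℝ (⊤:ℕ∞) u)
    (hms : MinimalHypersurfaceEq u) (C : ℝ) (hC : 0 < C)
    (hgrad : ∀ p, ‖gradient u p‖ ≤ C) (t : Plane)
    (φ : Plane → ℝ) (hφ : ContDiff ℝ (⊤:ℕ∞) φ) (hφs : HasCompactSupport φ)
    (hφ0 : ∀ x, 0 ≤ φ x) (hφ1 : ∀ x, φ x ≤ 1) :
    lamC C * ∫ x : Plane, φ x ^ 2 * ‖gradient u x - gradient u (x + t)‖ ^ 2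
      ≤ ∫ x : Plane, (4 * C * ‖t‖) *
          (φ x * (‖fderiv ℝ φ x‖ * ‖gradient u x - gradient u (x + t)‖)) := by
  set g := gradient u with hgdef
  have hg : ContDiff ℝ (⊤:ℕ∞) g := gradient_contDiff u hu
  have hgc : Continuous g := hg.continuous
  have hgtc : Continuous (fun x : Plane => g (x + t)) :=
    hgc.comp (continuous_id.add continuous_const)
  set d : Plane → Plane := fun x => g x - g (x + t) with hddef
  have hdc : Continuous d := hgc.sub hgtc
  set D : Plane → Plane := fun x => Fvec (g x) - Fvec (g (x + t)) with hDdef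
  have hDc : Continuous D :=
    (Fvec_contDiff.continuous.comp hgc).sub (Fvec_contDiff.continuous.comp hgtc)
  have hφc : Continuous φ := hφ.continuous
  have hdφc : Continuous (fderiv ℝ φ) := hφ.continuous_fderiv (by norm_cast)
  have huc : Continuous u := hu.continuous
  -- w and its bound
  set w : Plane → ℝ := fun y => u y - u (y + t) with hwdef
  have hwc : Continuous w := huc.sub (huc.comp (continuous_id.add continuous_const))
  have hfd_all : ∀ z, ‖fderiv ℝ u z‖ ≤ C := by
    intro z
    have h1 : ‖g z‖ = ‖fderiv ℝ u z‖ := by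
      rw [hgdef]
      exact LinearIsometryEquiv.norm_map _ _
    rw [← h1]
    exact hgrad z
  have hwb : ∀ x, |w x| ≤ C * ‖t‖ := by
    intro x
    have := (convex_univ (𝕜 := ℝ) (E := Plane)).norm_image_sub_le_of_norm_fderiv_le
      (fun z _ => (hu.differentiable (by norm_cast)) z)
      (fun z _ => hfd_all z) (Set.mem_univ (x + t)) (Set.mem_univ x)
    rw [hwdef]
    simp only [Real.norm_eq_abs] at this ⊢
    have heq : ‖x - (x + t)‖ = ‖t‖ := by
      rw [show x - (x + t) = -t by abel, norm_neg]
    calc |u x - u (x + t)| ≤ C * ‖x - (x + t)‖ := this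
      _ = C * ‖t‖ := by rw [heq]
  -- integrands
  set A : Plane → ℝ := fun x => φ x ^ 2 * ⟪d x, D x⟫ with hAdef
  set B : Plane → ℝ := fun x => (2 * φ x * w x) * (fderiv ℝ φ x (D x)) with hBdef
  have hAc : Continuous A := ((hφc.pow 2).mul (hdc.inner hDc))
  have hBc : Continuous B :=
    ((continuous_const.mul hφc).mul hwc).mul (hdφc.clm_apply hDc)
  have hAsupp : HasCompactSupport A := by
    apply HasCompactSupport.intro hφs
    intro x hx
    simp only [hAdef, image_eq_zero_of_notMem_tsupport hx]
    norm_num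
  have hBsupp : HasCompactSupport B := by
    apply HasCompactSupport.intro hφs
    intro x hx
    simp only [hBdef, image_eq_zero_of_notMem_tsupport hx]
    norm_num
  have hIA : Integrable A := hAc.integrable_of_hasCompactSupport hAsupp
  have hIB : Integrable B := hBc.integrable_of_hasCompactSupport hBsupp
  -- the identity
  have hid : ∫ x : Plane, (A x + B x) = 0 := key_identity u hu hms t φ hφ hφs
  have hAB : ∫ x : Plane, A x = - ∫ x : Plane, B x := by
    have := integral_add hIA hIB
    rw [hid] at this
    linarith [this]
  -- lower bound for A
  set lhs : Plane → ℝ := fun x => lamC C * (φ x ^ 2 * ‖d x‖ ^ 2) with hlhsdef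
  have hlhsc : Continuous lhs :=
    continuous_const.mul ((hφc.pow 2).mul ((hdc.norm).pow 2))
  have hlhssupp : HasCompactSupport lhs := by
    apply HasCompactSupport.intro hφs
    intro x hx
    simp only [hlhsdef, image_eq_zero_of_notMem_tsupport hx]
    norm_num
  have hIlhs : Integrable lhs := hlhsc.integrable_of_hasCompactSupport hlhssupp
  have hptA : ∀ x, lhs x ≤ A x := by
    intro x
    have hmono := Fvec_strong_mono (C := C) (g x) (g (x + t)) (hgrad x) (hgrad (x + t))
    have hcomm : ⟪d x, D x⟫ = ⟪Fvec (g x) - Fvec (g (x + t)), g x - g (x + t)⟫ := by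
      rw [hddef, hDdef]
      exact real_inner_comm _ _
    rw [hlhsdef, hAdef]
    dsimp only
    rw [hcomm]
    calc lamC C * (φ x ^ 2 * ‖d x‖ ^ 2)
        = φ x ^ 2 * (lamC C * ‖g x - g (x + t)‖ ^ 2) := by rw [hddef]; ring
      _ ≤ φ x ^ 2 * ⟪Fvec (g x) - Fvec (g (x + t)), g x - g (x + t)⟫ := by
          apply mul_le_mul_of_nonneg_left _ (by positivity)
          exact (by exact_mod_cast hmono : _)
  -- upper bound for -B
  set rhs : Plane → ℝ := fun x => (4 * C * ‖t‖) * (φ x * (‖fderiv ℝ φ x‖ * ‖d x‖)) with hrhsdef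
  have hrhsc : Continuous rhs :=
    continuous_const.mul (hφc.mul ((hdφc.norm).mul (hdc.norm)))
  have hrhssupp : HasCompactSupport rhs := by
    apply HasCompactSupport.intro hφs
    intro x hx
    simp only [hrhsdef, image_eq_zero_of_notMem_tsupport hx]
    norm_num
  have hIrhs : Integrable rhs := hrhsc.integrable_of_hasCompactSupport hrhssupp
  have hptB : ∀ x, - B x ≤ rhs x := by
    intro x
    have h1 : |B x| ≤ rhs x := by
      rw [hBdef, hrhsdef]
      dsimp only
      rw [abs_mul, abs_mul, abs_mul]
      have e1 : |(2:ℝ)| = 2 := by norm_num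
      have e2 : |φ x| = φ x := abs_of_nonneg (hφ0 x)
      have e3 : |fderiv ℝ φ x (D x)| ≤ ‖fderiv ℝ φ x‖ * ‖D x‖ := by
        rw [← Real.norm_eq_abs]
        exact (fderiv ℝ φ x).le_opNorm (D x)
      have e4 : ‖D x‖ ≤ 2 * ‖d x‖ := by
        rw [hDdef, hddef]
        exact Fvec_lipschitz (g x) (g (x + t))
      rw [e1, e2]
      have s1 : 2 * φ x * |w x| ≤ 2 * φ x * (C * ‖t‖) :=
        mul_le_mul_of_nonneg_left (hwb x) (mul_nonneg (by norm_num) (hφ0 x))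
      have s2 : |fderiv ℝ φ x (D x)| ≤ ‖fderiv ℝ φ x‖ * (2 * ‖d x‖) :=
        e3.trans (mul_le_mul_of_nonneg_left e4 (norm_nonneg _))
      have s4 : (0:ℝ) ≤ 2 * φ x * (C * ‖t‖) :=
        mul_nonneg (mul_nonneg (by norm_num) (hφ0 x)) (by positivity)
      calc 2 * φ x * |w x| * |fderiv ℝ φ x (D x)|
          ≤ 2 * φ x * (C * ‖t‖) * (‖fderiv ℝ φ x‖ * (2 * ‖d x‖)) :=
            mul_le_mul s1 s2 (abs_nonneg _) s4
        _ = 4 * C * ‖t‖ * (φ x * (‖fderiv ℝ φ x‖ * ‖d x‖)) := by ring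
    calc - B x ≤ |B x| := neg_le_abs _
      _ ≤ rhs x := h1
  -- put everything together
  have hstep1 : ∫ x : Plane, lhs x ≤ ∫ x : Plane, A x :=
    integral_mono hIlhs hIA hptA
  have hstep2 : - ∫ x : Plane, B x ≤ ∫ x : Plane, rhs x := by
    rw [← integral_neg]
    exact integral_mono hIB.neg hIrhs hptB
  have hconst : ∫ x : Plane, lhs x
      = lamC C * ∫ x : Plane, φ x ^ 2 * ‖d x‖ ^ 2 := by
    rw [hlhsdef, integral_const_mul]
  calc lamC C * ∫ x : Plane, φ x ^ 2 * ‖g x - g (x + t)‖ ^ 2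
      = ∫ x : Plane, lhs x := by rw [hconst]
    _ ≤ ∫ x : Plane, A x := hstep1
    _ = - ∫ x : Plane, B x := hAB
    _ ≤ ∫ x : Plane, rhs x := hstep2

/-! ### The energy argument: the gradient is translation invariant -/

lemma grad_translation_invariant (u : Plane → ℝ) (hu : ContDiff ℝ (⊤:ℕ∞) u)
    (hms : MinimalHypersurfaceEq u) (C : ℝ) (hC : 0 < C)
    (hgrad : ∀ p, ‖gradient u p‖ ≤ C) (t x₀ : Plane) :
    gradient u x₀ = gradient u (x₀ + t) := by
  rcases eq_or_ne t 0 with rfl | ht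
  · rw [add_zero]
  have htpos : 0 < ‖t‖ := norm_pos_iff.2 ht
  set g := gradient u with hgdef
  have hg : ContDiff ℝ (⊤:ℕ∞) g := gradient_contDiff u hu
  have hgc : Continuous g := hg.continuous
  have hgtc : Continuous (fun x : Plane => g (x + t)) :=
    hgc.comp (continuous_id.add continuous_const)
  set d : Plane → Plane := fun x => g x - g (x + t) with hddef
  have hdc : Continuous d := hgc.sub hgtc
  set h : Plane → ℝ := fun x => ‖d x‖ ^ 2 with hhdef
  have hhc : Continuous h := (hdc.norm).pow 2
  have hhnn : ∀ x, 0 ≤ h x := fun x => sq_nonneg _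
  obtain ⟨M, hMpos, hcut⟩ := exists_cutoff
  set lam := lamC C with hlamdef
  have hlam : 0 < lam := lamC_pos C
  set K := 4 * C * ‖t‖ with hKdef
  have hK : 0 < K := by positivity
  set B1 := (volume (Metric.ball (0:Plane) 1)).toReal with hB1def
  have hB1 : 0 ≤ B1 := ENNReal.toReal_nonneg
  -- integrability of h on compacts
  have hIh : ∀ r : ℝ, IntegrableOn h (Metric.closedBall (0:Plane) r) :=
    fun r => (hhc.continuousOn).integrableOn_compact (isCompact_closedBall _ _)
  have hIhb : ∀ r : ℝ, IntegrableOn h (Metric.ball (0:Plane) r) :=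
    fun r => (hIh r).mono_set Metric.ball_subset_closedBall
  set f : ℝ → ℝ := fun R => ∫ x in Metric.ball (0:Plane) R, h x with hfdef
  have hf_nonneg : ∀ R, 0 ≤ f R := fun R => setIntegral_nonneg measurableSet_ball
    (fun x _ => hhnn x)
  have hf_mono : Monotone f := by
    intro R1 R2 hle
    apply setIntegral_mono_set (hIhb R2)
      (Filter.Eventually.of_forall (fun x => hhnn x))
    exact HasSubset.Subset.eventuallyLE (Metric.ball_subset_ball hle)
  -- volume of closed balls
  have hvol : ∀ r : ℝ, 0 ≤ r →
      (volume (Metric.closedBall (0:Plane) r)).toReal = r ^ 2 * B1 := by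
    intro r hr
    rw [Measure.addHaar_closedBall volume (0:Plane) hr]
    rw [ENNReal.toReal_mul, ENNReal.toReal_ofReal (by positivity)]
    congr 2
    simp
  -- the main per-R estimates
  have hmain : ∀ R : ℝ, 0 < R →
      (f R ≤ (4 * ((K^2/lam) * (4*M^2*B1))) / (3*lam)) ∧
      (∀ s : ℝ, 0 < s → lam * f R ≤ K * M * (s * (∫ x in
          (Metric.closedBall (0:Plane) (2*R) \ Metric.ball (0:Plane) R), h x) / 2
        + 2 * B1 / s)) := by
    intro R hR
    obtain ⟨φ, hφsm, hφsupp, hφ0, hφ1, hφone, hφd1, hφzero, hφd2, hφdb⟩ := hcut R hR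
    have hφc : Continuous φ := hφsm.continuous
    have hdφc : Continuous (fderiv ℝ φ) := hφsm.continuous_fderiv (by norm_cast)
    have hdφsupp : HasCompactSupport (fderiv ℝ φ) := hφsupp.fderiv (𝕜 := ℝ)
    -- the Caccioppoli inequality
    have hcacc := cacc u hu hms C hC hgrad t φ hφsm hφsupp hφ0 hφ1
    -- names for the two integrals
    set X : ℝ := ∫ x : Plane, φ x ^ 2 * h x with hXdef
    have hXint : Integrable (fun x => φ x ^ 2 * h x) := by
      apply Continuous.integrable_of_hasCompactSupport ((hφc.pow 2).mul hhc)
      apply HasCompactSupport.intro hφsupp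
      intro x hx
      simp [image_eq_zero_of_notMem_tsupport hx]
    have hXnn : 0 ≤ X := integral_nonneg (fun x => by
      have := hhnn x; positivity)
    set rhs : Plane → ℝ := fun x => K * (φ x * (‖fderiv ℝ φ x‖ * ‖d x‖)) with hrhsdef
    have hrhsc : Continuous rhs := continuous_const.mul (hφc.mul ((hdφc.norm).mul hdc.norm))
    have hrhssupp : HasCompactSupport rhs := by
      apply HasCompactSupport.intro hφsupp
      intro x hx
      simp [hrhsdef, image_eq_zero_of_notMem_tsupport hx]
    have hrhsint : Integrable rhs := hrhsc.integrable_of_hasCompactSupport hrhssupp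
    have hcacc' : lam * X ≤ ∫ x : Plane, rhs x := by
      rw [hXdef]
      exact hcacc
    -- f R ≤ X
    have hfX : f R ≤ X := by
      have h1 : f R = ∫ x in Metric.ball (0:Plane) R, φ x ^ 2 * h x := by
        apply setIntegral_congr_fun measurableSet_ball
        intro x hx
        have hφx : φ x = 1 := hφone x (le_of_lt (by simpa [Metric.mem_ball,
          dist_zero_right] using hx))
        simp only [hφx]
        ring
      rw [h1, hXdef]
      apply setIntegral_le_integral hXint
      apply Filter.Eventually.of_forall
      intro x
      have := hhnn x
      positivity
    refine ⟨?_, ?_⟩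
    · -- Use 1 : total energy bound
      -- pointwise Young inequality
      have hyoung : ∀ x : Plane, rhs x ≤ (lam/4) * (φ x ^ 2 * h x)
          + (K^2/lam) * ‖fderiv ℝ φ x‖ ^ 2 := by
        intro x
        set a := φ x * ‖d x‖ with hadef
        set b := ‖fderiv ℝ φ x‖ with hbdef
        have ha : 0 ≤ a := mul_nonneg (hφ0 x) (norm_nonneg _)
        have hb : 0 ≤ b := norm_nonneg _
        have key : K * (a * b) ≤ (lam/4) * a^2 + (K^2/lam) * b^2 := by
          have h2 : lam * (K * (a * b)) ≤ (lam^2/4) * a^2 + K^2 * b^2 := by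
            nlinarith [sq_nonneg ((lam/2) * a - K * b)]
          have h3 : lam * ((lam/4) * a^2 + (K^2/lam) * b^2)
              = (lam^2/4) * a^2 + K^2 * b^2 := by
            field_simp
          have h4 : lam * (K * (a * b)) ≤ lam * ((lam/4) * a^2 + (K^2/lam) * b^2) := by
            rw [h3]; exact h2
          exact le_of_mul_le_mul_left h4 hlam
        calc rhs x = K * (a * b) := by rw [hrhsdef, hadef, hbdef]; ring
          _ ≤ (lam/4) * a^2 + (K^2/lam) * b^2 := key
          _ = (lam/4) * (φ x ^ 2 * h x) + (K^2/lam) * ‖fderiv ℝ φ x‖ ^ 2 := by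
              rw [hadef, hbdef, hhdef]; ring
      -- integrate it
      have hDφint : Integrable (fun x => ‖fderiv ℝ φ x‖ ^ 2) := by
        apply Continuous.integrable_of_hasCompactSupport ((hdφc.norm).pow 2)
        apply HasCompactSupport.intro hdφsupp
        intro x hx
        simp [image_eq_zero_of_notMem_tsupport hx]
      have hint2 : ∫ x : Plane, rhs x ≤ (lam/4) * X
          + (K^2/lam) * ∫ x : Plane, ‖fderiv ℝ φ x‖ ^ 2 := by
        have := integral_mono hrhsint
          (((hXint.const_mul (lam/4))).add ((hDφint.const_mul (K^2/lam)))) hyoung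
        calc ∫ x : Plane, rhs x
            ≤ ∫ x : Plane, ((lam/4) * (φ x ^ 2 * h x) + (K^2/lam) * ‖fderiv ℝ φ x‖ ^ 2) := this
          _ = (lam/4) * X + (K^2/lam) * ∫ x : Plane, ‖fderiv ℝ φ x‖ ^ 2 := by
              rw [integral_add ((hXint.const_mul (lam/4))) ((hDφint.const_mul (K^2/lam))),
                integral_const_mul, integral_const_mul, hXdef]
      -- bound the gradient integral
      have hDφbound : ∫ x : Plane, ‖fderiv ℝ φ x‖ ^ 2 ≤ 4 * M^2 * B1 := by
        have hzero_out : ∀ x ∉ Metric.closedBall (0:Plane) (2*R),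
            ‖fderiv ℝ φ x‖ ^ 2 = 0 := by
          intro x hx
          rw [hφd2 x (by simpa [Metric.mem_closedBall, dist_zero_right, not_le] using hx)]
          simp
        rw [← setIntegral_eq_integral_of_forall_compl_eq_zero hzero_out]
        have hle : ∀ x ∈ Metric.closedBall (0:Plane) (2*R),
            ‖fderiv ℝ φ x‖ ^ 2 ≤ (M/R)^2 := by
          intro x _
          have := hφdb x
          nlinarith [norm_nonneg (fderiv ℝ φ x), div_nonneg hMpos.le hR.le]
        calc ∫ x in Metric.closedBall (0:Plane) (2*R), ‖fderiv ℝ φ x‖ ^ 2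
            ≤ ∫ _x in Metric.closedBall (0:Plane) (2*R), (M/R)^2 := by
              apply setIntegral_mono_on
                ((hDφint.integrableOn).mono_set (Set.subset_univ _))
                (integrableOn_const (LT.lt.ne measure_closedBall_lt_top))
                measurableSet_closedBall hle
          _ = (volume (Metric.closedBall (0:Plane) (2*R))).toReal * (M/R)^2 := by
              rw [setIntegral_const]; rfl
          _ = ((2*R)^2 * B1) * (M/R)^2 := by rw [hvol (2*R) (by positivity)]
          _ = 4 * M^2 * B1 := by field_simp; ring
      -- combine
      have hfinal : lam * X ≤ (lam/4) * X + (K^2/lam) * (4 * M^2 * B1) := by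
        calc lam * X ≤ ∫ x : Plane, rhs x := hcacc'
          _ ≤ (lam/4) * X + (K^2/lam) * ∫ x : Plane, ‖fderiv ℝ φ x‖ ^ 2 := hint2
          _ ≤ (lam/4) * X + (K^2/lam) * (4 * M^2 * B1) := by
              have : (K^2/lam) * ∫ x : Plane, ‖fderiv ℝ φ x‖ ^ 2
                  ≤ (K^2/lam) * (4 * M^2 * B1) :=
                mul_le_mul_of_nonneg_left hDφbound (by positivity)
              linarith
      have hXQ : X ≤ (4 * ((K^2/lam) * (4*M^2*B1))) / (3*lam) := by
        rw [le_div_iff₀ (by positivity)]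
        nlinarith [hfinal, hXnn, hlam]
      exact hfX.trans hXQ
    · -- Use 2 : annulus bound
      intro s hs
      set ann := Metric.closedBall (0:Plane) (2*R) \ Metric.ball (0:Plane) R with hanndef
      have hann_meas : MeasurableSet ann :=
        measurableSet_closedBall.diff measurableSet_ball
      have hIann : IntegrableOn h ann := (hIh (2*R)).mono_set Set.diff_subset
      set T := ∫ x in ann, h x with hTdef
      have hTnn : 0 ≤ T := setIntegral_nonneg hann_meas (fun x _ => hhnn x)
      -- rhs vanishes off the annulus
      have hrhs_out : ∀ x ∉ ann, rhs x = 0 := by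
        intro x hx
        rw [hanndef] at hx
        simp only [Set.mem_diff, Metric.mem_closedBall, Metric.mem_ball,
          dist_zero_right, not_and, not_not] at hx
        rcases le_or_gt ‖x‖ (2*R) with hcase | hcase
        · have hxR : ‖x‖ < R := hx hcase
          rw [hrhsdef]
          simp [hφd1 x hxR]
        · rw [hrhsdef]
          simp [hφd2 x hcase]
      -- bound on the annulus
      set bnd : Plane → ℝ := fun x => (K*M/R) * ((s*R/2) * h x + 1/(2*s*R)) with hbnddef
      have hIbnd : IntegrableOn bnd ann := by
        apply Integrable.const_mul
        exact (hIann.const_mul _).add (integrableOn_const (LT.lt.ne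
          (lt_of_le_of_lt (measure_mono Set.diff_subset) measure_closedBall_lt_top)))
      have hptbnd : ∀ x ∈ ann, rhs x ≤ bnd x := by
        intro x _
        have e1 : φ x * (‖fderiv ℝ φ x‖ * ‖d x‖) ≤ 1 * ((M/R) * ‖d x‖) := by
          apply mul_le_mul (hφ1 x)
            (mul_le_mul_of_nonneg_right (hφdb x) (norm_nonneg _))
            (by positivity) (by norm_num)
        have e2 : rhs x ≤ (K*M/R) * ‖d x‖ := by
          calc rhs x ≤ K * (1 * ((M/R) * ‖d x‖)) :=
                mul_le_mul_of_nonneg_left e1 hK.le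
            _ = (K*M/R) * ‖d x‖ := by ring
        have e3 : ‖d x‖ ≤ (s*R/2) * h x + 1/(2*s*R) := by
          simp only [hhdef]
          have h1 : 0 < s * R := mul_pos hs hR
          have key2 : 2*(s*R)*‖d x‖ ≤ (s*R)^2*‖d x‖^2 + 1 := by
            nlinarith [sq_nonneg (s*R*‖d x‖ - 1)]
          calc ‖d x‖ = (2*(s*R)*‖d x‖) / (2*(s*R)) := by field_simp
            _ ≤ ((s*R)^2*‖d x‖^2 + 1) / (2*(s*R)) := by gcongr
            _ = s*R/2*‖d x‖^2 + 1/(2*s*R) := by field_simp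
        calc rhs x ≤ (K*M/R) * ‖d x‖ := e2
          _ ≤ bnd x := by
              rw [hbnddef]
              exact mul_le_mul_of_nonneg_left e3 (by positivity)
      have hintann : ∫ x : Plane, rhs x ≤ ∫ x in ann, bnd x := by
        rw [← setIntegral_eq_integral_of_forall_compl_eq_zero hrhs_out]
        exact setIntegral_mono_on (hrhsint.integrableOn.mono_set (Set.subset_univ _))
          hIbnd hann_meas hptbnd
      have hbndval : ∫ x in ann, bnd x
          = (K*M/R) * ((s*R/2) * T + (volume ann).toReal * (1/(2*s*R))) := by
        rw [hbnddef]
        rw [integral_const_mul]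
        congr 1
        rw [integral_add (hIann.const_mul _) (integrableOn_const (LT.lt.ne
          (lt_of_le_of_lt (measure_mono Set.diff_subset) measure_closedBall_lt_top)))]
        rw [integral_const_mul, setIntegral_const, hTdef]
        simp [smul_eq_mul, Measure.real]
      have hvolann : (volume ann).toReal ≤ 4 * R^2 * B1 := by
        have h1 : volume ann ≤ volume (Metric.closedBall (0:Plane) (2*R)) :=
          measure_mono Set.diff_subset
        have h2 := ENNReal.toReal_mono (measure_closedBall_lt_top).ne h1
        calc (volume ann).toReal ≤ (volume (Metric.closedBall (0:Plane) (2*R))).toReal := h2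
          _ = (2*R)^2 * B1 := hvol (2*R) (by positivity)
          _ = 4 * R^2 * B1 := by ring
      have hfinal2 : ∫ x in ann, bnd x ≤ K * M * (s * T / 2 + 2 * B1 / s) := by
        rw [hbndval]
        have h1 : (K*M/R) * ((s*R/2) * T) = K * M * (s * T / 2) := by
          field_simp
        have h2 : (K*M/R) * ((volume ann).toReal * (1/(2*s*R)))
            ≤ (K*M/R) * ((4 * R^2 * B1) * (1/(2*s*R))) := by
          apply mul_le_mul_of_nonneg_left _ (by positivity)
          apply mul_le_mul_of_nonneg_right hvolann (by positivity)
        have h3 : (K*M/R) * ((4 * R^2 * B1) * (1/(2*s*R))) = K * M * (2 * B1 / s) := by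
          field_simp; ring
        calc (K*M/R) * ((s*R/2) * T + (volume ann).toReal * (1/(2*s*R)))
            = (K*M/R) * ((s*R/2) * T) + (K*M/R) * ((volume ann).toReal * (1/(2*s*R))) := by
              ring
          _ ≤ K * M * (s * T / 2) + K * M * (2 * B1 / s) := by
              rw [h1]
              exact add_le_add le_rfl (h2.trans_eq h3)
          _ = K * M * (s * T / 2 + 2 * B1 / s) := by ring
      calc lam * f R ≤ lam * X := mul_le_mul_of_nonneg_left hfX hlam.le
        _ ≤ ∫ x : Plane, rhs x := hcacc'
        _ ≤ ∫ x in ann, bnd x := hintann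
        _ ≤ K * M * (s * T / 2 + 2 * B1 / s) := hfinal2
  -- upper bound Q for the energies
  set Q := (4 * ((K^2/lam) * (4*M^2*B1))) / (3*lam) with hQdef
  have hQ : ∀ R : ℝ, f R ≤ Q := by
    intro R
    rcases le_or_gt R 1 with hle | hlt
    · exact (hf_mono hle).trans (hmain 1 one_pos).1
    · exact (hmain R (lt_trans one_pos hlt)).1
  have hbdd : BddAbove (Set.range f) := by
    refine ⟨Q, ?_⟩
    rintro _ ⟨R, rfl⟩
    exact hQ R
  set L := ⨆ R, f R with hLdef
  have hLlim : Filter.Tendsto f Filter.atTop (nhds L) := tendsto_atTop_ciSup hf_mono hbdd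
  have hfL : ∀ R, f R ≤ L := fun R => le_ciSup hbdd R
  -- the annulus energies tend to 0
  set Tf : ℝ → ℝ := fun R => ∫ x in
      (Metric.closedBall (0:Plane) (2*R) \ Metric.ball (0:Plane) R), h x with hTfdef
  have hTf_nonneg : ∀ R, 0 ≤ Tf R := fun R => setIntegral_nonneg
    (measurableSet_closedBall.diff measurableSet_ball) (fun x _ => hhnn x)
  have hTf_le : ∀ R : ℝ, 0 < R → Tf R ≤ f (2*R+1) - f R := by
    intro R hR
    have hsub : Metric.ball (0:Plane) R ⊆ Metric.closedBall (0:Plane) (2*R) :=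
      Metric.ball_subset_closedBall.trans
        (Metric.closedBall_subset_closedBall (by linarith))
    have hunion : Metric.ball (0:Plane) R ∪
        (Metric.closedBall (0:Plane) (2*R) \ Metric.ball (0:Plane) R)
        = Metric.closedBall (0:Plane) (2*R) := Set.union_diff_cancel hsub
    have hdisj : Disjoint (Metric.ball (0:Plane) R)
        (Metric.closedBall (0:Plane) (2*R) \ Metric.ball (0:Plane) R) :=
      Set.disjoint_sdiff_right
    have hsum : f R + Tf R = ∫ x in Metric.closedBall (0:Plane) (2*R), h x := by
      rw [hfdef, hTfdef, ← setIntegral_union hdisj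
        (measurableSet_closedBall.diff measurableSet_ball)
        (hIhb R) ((hIh (2*R)).mono_set Set.diff_subset), hunion]
    have hle2 : ∫ x in Metric.closedBall (0:Plane) (2*R), h x ≤ f (2*R+1) := by
      apply setIntegral_mono_set (hIhb (2*R+1))
        (Filter.Eventually.of_forall (fun x => hhnn x))
      exact HasSubset.Subset.eventuallyLE
        (Metric.closedBall_subset_ball (by linarith))
    linarith [hsum, hle2]
  have h2R1 : Filter.Tendsto (fun R : ℝ => 2*R+1) Filter.atTop Filter.atTop :=
    Filter.tendsto_atTop_add_const_right _ 1
      (Filter.Tendsto.const_mul_atTop two_pos Filter.tendsto_id)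
  have hupper : Filter.Tendsto (fun R => f (2*R+1) - f R) Filter.atTop (nhds 0) := by
    have := (hLlim.comp h2R1).sub hLlim
    rwa [sub_self] at this
  have hTflim : Filter.Tendsto Tf Filter.atTop (nhds 0) := by
    apply tendsto_of_tendsto_of_tendsto_of_le_of_le' tendsto_const_nhds hupper
    · exact Filter.Eventually.of_forall hTf_nonneg
    · filter_upwards [Filter.eventually_gt_atTop 0] with R hR
      exact hTf_le R hR
  -- conclude lam * L ≤ 2*K*M*B1/s for every s > 0
  have hLs : ∀ s : ℝ, 0 < s → lam * L ≤ K * M * (2 * B1 / s) := by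
    intro s hs
    have hleft : Filter.Tendsto (fun R => lam * f R) Filter.atTop (nhds (lam * L)) :=
      hLlim.const_mul lam
    have hright : Filter.Tendsto (fun R => K * M * (s * Tf R / 2 + 2 * B1 / s))
        Filter.atTop (nhds (K * M * (s * 0 / 2 + 2 * B1 / s))) := by
      apply Filter.Tendsto.const_mul
      apply Filter.Tendsto.add_const
      exact (hTflim.const_mul s).div_const 2
    have hev : ∀ᶠ R in Filter.atTop, lam * f R ≤ K * M * (s * Tf R / 2 + 2 * B1 / s) := by
      filter_upwards [Filter.eventually_gt_atTop 0] with R hR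
      exact (hmain R hR).2 s hs
    have := le_of_tendsto_of_tendsto hleft hright hev
    calc lam * L ≤ K * M * (s * 0 / 2 + 2 * B1 / s) := this
      _ = K * M * (2 * B1 / s) := by ring
  have hL0 : L ≤ 0 := by
    by_contra hcon
    push_neg at hcon
    have hlamL : 0 < lam * L := mul_pos hlam hcon
    set c := K * M * (2 * B1) with hcdef
    have hc : 0 ≤ c := by positivity
    have hs : 0 < (c + 1) / (lam * L) := by positivity
    have := hLs ((c + 1) / (lam * L)) hs
    have h2 : K * M * (2 * B1 / ((c + 1) / (lam * L))) = c * (lam * L) / (c + 1) := by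
      rw [hcdef]
      field_simp
    rw [h2] at this
    have h3 : c * (lam * L) / (c + 1) < lam * L := by
      rw [div_lt_iff₀ (by positivity)]
      nlinarith [hlamL, hc]
    linarith
  -- hence all energies vanish
  have hf0 : ∀ R, f R = 0 := fun R => le_antisymm ((hfL R).trans hL0) (hf_nonneg R)
  -- pointwise vanishing
  have hpt : h x₀ = 0 := by
    by_contra hcon
    have hx0pos : 0 < h x₀ := lt_of_le_of_ne (hhnn x₀) (Ne.symm hcon)
    set R := ‖x₀‖ + 1 with hRdef
    have hmem : x₀ ∈ Function.support h ∩ Metric.ball (0:Plane) R := by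
      constructor
      · exact fun h0 => hcon h0
      · simp only [Metric.mem_ball, dist_zero_right, hRdef]
        linarith
    have hopen : IsOpen (Function.support h ∩ Metric.ball (0:Plane) R) := by
      apply IsOpen.inter _ Metric.isOpen_ball
      exact isOpen_compl_singleton.preimage hhc
    have hpos := hopen.measure_pos volume ⟨x₀, hmem⟩
    have := (setIntegral_pos_iff_support_of_nonneg_ae
      (Filter.Eventually.of_forall (fun x => hhnn x) :
        0 ≤ᶠ[ae (volume.restrict (Metric.ball (0:Plane) R))] h) (hIhb R)).2 hpos
    rw [show (∫ x in Metric.ball (0:Plane) R, h x) = f R from rfl, hf0 R] at this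
    exact lt_irrefl 0 this
  have : ‖d x₀‖ = 0 := by
    have := hpt
    rw [hhdef] at this
    exact pow_eq_zero_iff (by norm_num) |>.1 this
  have hd0 : d x₀ = 0 := norm_eq_zero.1 this
  rw [hddef] at hd0
  exact sub_eq_zero.1 hd0

/-! ### The main theorem -/

theorem stmt9 (u : Plane → ℝ) (hu : ContDiff ℝ (⊤ : ℕ∞) u)
    (hms : MinimalHypersurfaceEq u)
    (C : ℝ) (hC : 0 < C) (hgrad : ∀ p, ‖gradient u p‖ ≤ C) :
    ∃ a₁ a₂ b : ℝ, ∀ p : Plane, u p = a₁ * p 0 + a₂ * p 1 + b := by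
  have hu' : ContDiff ℝ (⊤:ℕ∞) u := hu.of_le (by simp)
  have hconst : ∀ x : Plane, gradient u x = gradient u 0 := by
    intro x
    have := grad_translation_invariant u hu' hms C hC hgrad x 0
    rw [zero_add] at this
    exact this.symm
  have hfd : ∀ x : Plane, fderiv ℝ u x = fderiv ℝ u 0 := by
    intro x
    have h := hconst x
    have h2 : (InnerProductSpace.toDual ℝ Plane).symm (fderiv ℝ u x)
        = (InnerProductSpace.toDual ℝ Plane).symm (fderiv ℝ u 0) := h
    exact (InnerProductSpace.toDual ℝ Plane).symm.injective h2
  set ℓ : Plane →L[ℝ] ℝ := fderiv ℝ u 0 with hℓdef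
  have hudiff : Differentiable ℝ u := hu'.differentiable (by norm_cast)
  have hdiff : Differentiable ℝ (fun y : Plane => u y - ℓ y) :=
    hudiff.sub ℓ.differentiable
  have hzero : ∀ x : Plane, fderiv ℝ (fun y : Plane => u y - ℓ y) x = 0 := by
    intro x
    rw [fderiv_fun_sub (hudiff x) ℓ.differentiableAt, ℓ.fderiv, hfd x, hℓdef, sub_self]
  have hconst2 : ∀ x : Plane, u x - ℓ x = u 0 - ℓ 0 :=
    fun x => is_const_of_fderiv_eq_zero hdiff hzero x 0
  refine ⟨ℓ (EuclideanSpace.single 0 1), ℓ (EuclideanSpace.single 1 1), u 0, ?_⟩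
  intro p
  have h1 := hconst2 p
  have h2 : ℓ p = ℓ (EuclideanSpace.single 0 1) * p 0
      + ℓ (EuclideanSpace.single 1 1) * p 1 := by
    rw [clm_apply_decomp ℓ p, Fin.sum_univ_two]
  have h3 : ℓ (0 : Plane) = 0 := map_zero ℓ
  rw [h3] at h1
  linarith [h1, h2]
end
end

section
/- Let f : ℝ → ℝ be given by f(x) = √(1 + cosh⁴(x)) and let u(x) = tanh(x). Then for every x ∈ ℝ one has f(x)·u'(x)/√(1 + u'(x)²) = 1; moreover |u(x)| < 1 and 0 < u'(x) ≤ 1 for all x ∈ ℝ, so u is a bounded non-constant solution with bounded derivative. -/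
open Real

/-! Since `tanh' = 1 / cosh²`, writing `a = cosh² x` the quantity to compute is
`√(1 + a²) · a⁻¹ / √(1 + a⁻²)`, which equals `1` because `a² (1 + a⁻²) = 1 + a²`. -/

theorem Real.hasDerivAt_tanh (x : ℝ) : HasDerivAt tanh (1 / cosh x ^ 2) x := by
  have h := (hasDerivAt_sinh x).div (hasDerivAt_cosh x) (cosh_pos x).ne'
  rwa [← sq, ← sq, cosh_sq_sub_sinh_sq,
    show sinh / cosh = tanh from funext fun y => (tanh_eq_sinh_div_cosh y).symm] at h

theorem Real.deriv_tanh (x : ℝ) : deriv tanh x = 1 / cosh x ^ 2 :=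
  (hasDerivAt_tanh x).deriv

theorem Real.one_div_cosh_sq_pos (x : ℝ) : 0 < 1 / cosh x ^ 2 := by
  have := cosh_pos x
  positivity

theorem Real.one_div_cosh_sq_le_one (x : ℝ) : 1 / cosh x ^ 2 ≤ 1 :=
  div_le_one_of_le₀ (one_le_pow₀ (one_le_cosh x)) (sq_nonneg _)

theorem sqrt_one_add_sq_mul_inv_div_sqrt_one_add_inv_sq {a : ℝ} (ha : 0 < a) :
    √(1 + a ^ 2) * a⁻¹ / √(1 + a⁻¹ ^ 2) = 1 := by
  have hsq : 1 + a⁻¹ ^ 2 = (1 + a ^ 2) / a ^ 2 := by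
    field_simp
    ring
  have hpos : 0 < √(1 + a ^ 2) := by positivity
  rw [hsq, sqrt_div' _ (sq_nonneg a), sqrt_sq ha.le]
  field_simp

theorem stmt12 (f u : ℝ → ℝ)
    (hf : ∀ x, f x = Real.sqrt (1 + Real.cosh x ^ 4))
    (hu : ∀ x, u x = Real.tanh x) :
    (∀ x : ℝ, f x * deriv u x / Real.sqrt (1 + deriv u x ^ 2) = 1) ∧
    (∀ x : ℝ, |u x| < 1) ∧
    (∀ x : ℝ, 0 < deriv u x ∧ deriv u x ≤ 1) := by
  obtain rfl : u = tanh := funext hu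
  refine ⟨fun x => ?_, abs_tanh_lt_one, fun x => ?_⟩
  · rw [hf, deriv_tanh, one_div, show cosh x ^ 4 = (cosh x ^ 2) ^ 2 by ring]
    exact sqrt_one_add_sq_mul_inv_div_sqrt_one_add_inv_sq (pow_pos (cosh_pos x) 2)
  · rw [deriv_tanh]
    exact ⟨one_div_cosh_sq_pos x, one_div_cosh_sq_le_one x⟩
end

section
/- Let h : ℝ → ℝ be given by h(x) = √(2x⁴ + 6x² + 5)/(x² + 2) and let w(x) = x + arctan(x). Then for every x ∈ ℝ one has w'(x) = (x² + 2)/(x² + 1), h(x)·w'(x)/√(1 + w'(x)²) = 1, and 1 < w'(x) ≤ 2; moreover w(x) → +∞ as x → +∞ and w(x) → −∞ as x → −∞, so w is a solution with bounded derivative that is unbounded both from below and from above. -/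
open Real Filter

noncomputable section

theorem stmt15 (h w : ℝ → ℝ)
    (hh : ∀ x, h x = Real.sqrt (2 * x ^ 4 + 6 * x ^ 2 + 5) / (x ^ 2 + 2))
    (hw : ∀ x, w x = x + Real.arctan x) :
    (∀ x : ℝ,
      deriv w x = (x ^ 2 + 2) / (x ^ 2 + 1) ∧
      h x * deriv w x / Real.sqrt (1 + deriv w x ^ 2) = 1 ∧
      1 < deriv w x ∧ deriv w x ≤ 2) ∧
    Tendsto w atTop atTop ∧ Tendsto w atBot atBot := by
  have hwe : w = fun x => x + Real.arctan x := funext hw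
  have hderiv : ∀ x : ℝ, deriv w x = (x ^ 2 + 2) / (x ^ 2 + 1) := by
    intro x
    have h1 : HasDerivAt w (1 + 1 / (1 + x ^ 2)) x := by
      rw [hwe]
      exact (hasDerivAt_id x).add (Real.hasDerivAt_arctan x)
    have hx1 : (1 : ℝ) + x ^ 2 > 0 := by positivity
    rw [h1.deriv]
    field_simp
    ring
  refine ⟨fun x => ?_, ?_, ?_⟩
  · have hx1 : (0 : ℝ) < x ^ 2 + 1 := by positivity
    have hx2 : (0 : ℝ) < x ^ 2 + 2 := by positivity
    have hQ : (0 : ℝ) < 2 * x ^ 4 + 6 * x ^ 2 + 5 := by positivity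
    refine ⟨hderiv x, ?_, ?_, ?_⟩
    · rw [hderiv x, hh x]
      have key : 1 + ((x ^ 2 + 2) / (x ^ 2 + 1)) ^ 2
          = (2 * x ^ 4 + 6 * x ^ 2 + 5) / (x ^ 2 + 1) ^ 2 := by
        field_simp; ring
      rw [key, Real.sqrt_div hQ.le, Real.sqrt_sq hx1.le]
      have hs : Real.sqrt (2 * x ^ 4 + 6 * x ^ 2 + 5) ≠ 0 := (Real.sqrt_pos.mpr hQ).ne'
      field_simp
    · rw [hderiv x]
      rw [lt_div_iff₀ hx1]; linarith
    · rw [hderiv x]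
      rw [div_le_iff₀ hx1]; nlinarith [sq_nonneg x]
  · rw [hwe]
    apply tendsto_atTop_mono (fun x => ?_) (tendsto_atTop_add_const_right _ (-(π/2)) tendsto_id)
    have := Real.neg_pi_div_two_lt_arctan x
    simp only [id]
    linarith
  · rw [hwe]
    apply tendsto_atBot_mono (fun x => ?_) (tendsto_atBot_add_const_right _ (π/2) tendsto_id)
    have := Real.arctan_lt_pi_div_two x
    simp only [id]
    linarith
end
end
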